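/- arXiv:1308.4711 — 12 statements merged into one kernel-verified Lean document; each statement's English description precedes it below -/
import Mathlib

section
/- Let E be a ring. The poset of idempotents of E satisfies the descending chain condition if and only if E has no infinite set of pairwise orthogonal nonzero idempotents. -/
/-- In any ring `E`, the poset of idempotents (with `e ≤ e'` iff `e * e' = e = e' * e`)
satisfies the descending chain condition iff `E` has no infinite set of pairwise orthogonal
nonzero idempotents. -/
theorem idempotent_dcc_iff_no_infinite_orthogonal (E : Type*) [Ring E] :
    (¬ ∃ f : ℕ → E, (∀ n, IsIdempotentElem (f n)) ∧
        (∀ n, f (n + 1) * f n = f (n + 1) ∧ f n * f (n + 1) = f (n + 1)) ∧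
        ∀ n, f (n + 1) ≠ f n) ↔
    (¬ ∃ S : Set E, S.Infinite ∧ (∀ e ∈ S, IsIdempotentElem e ∧ e ≠ 0) ∧
        ∀ e ∈ S, ∀ f ∈ S, e ≠ f → e * f = 0 ∧ f * e = 0) := by
  apply not_congr
  constructor
  · -- descending chain ⟹ infinite orthogonal set
    rintro ⟨f, hid, hle, hne⟩
    have hmono : ∀ m n, m ≤ n → f m * f n = f n ∧ f n * f m = f n := by
      intro m n hmn
      induction n with
      | zero =>
        obtain rfl := Nat.le_zero.mp hmn
        exact ⟨(hid 0).eq, (hid 0).eq⟩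
      | succ n ih =>
        rcases Nat.lt_or_ge m (n + 1) with h | h
        · have ih' := ih (Nat.lt_succ_iff.mp h)
          constructor
          · rw [← (hle n).2, ← mul_assoc, ih'.1]
          · calc f (n + 1) * f m = (f (n + 1) * f n) * f m := by rw [(hle n).1]
              _ = f (n + 1) * (f n * f m) := by rw [mul_assoc]
              _ = f (n + 1) * f n := by rw [ih'.2]
              _ = f (n + 1) := (hle n).1
        · obtain rfl := le_antisymm hmn h
          exact ⟨(hid _).eq, (hid _).eq⟩
    set g : ℕ → E := fun n => f n - f (n + 1) with hg
    have hgid : ∀ n, IsIdempotentElem (g n) := by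
      intro n
      show (f n - f (n + 1)) * (f n - f (n + 1)) = f n - f (n + 1)
      rw [sub_mul, mul_sub, mul_sub, (hid n).eq, (hid (n + 1)).eq, (hle n).1, (hle n).2]
      abel
    have hgne : ∀ n, g n ≠ 0 := by
      intro n h
      exact hne n (sub_eq_zero.mp h).symm
    have horth : ∀ m n, m < n → g m * g n = 0 ∧ g n * g m = 0 := by
      intro m n hmn
      have h1 := hmono m n (le_of_lt hmn)
      have h2 := hmono m (n + 1) (by omega)
      have h3 := hmono (m + 1) n hmn
      have h4 := hmono (m + 1) (n + 1) (by omega)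
      constructor
      · show (f m - f (m + 1)) * (f n - f (n + 1)) = 0
        rw [sub_mul, mul_sub, mul_sub, h1.1, h2.1, h3.1, h4.1]
        abel
      · show (f n - f (n + 1)) * (f m - f (m + 1)) = 0
        rw [sub_mul, mul_sub, mul_sub, h1.2, h2.2, h3.2, h4.2]
        abel
    have hginj : Function.Injective g := by
      intro m n h
      by_contra hne'
      have horth' : g m * g n = 0 := by
        rcases Nat.lt_or_gt_of_ne hne' with h' | h'
        · exact (horth m n h').1
        · exact (horth n m h').2
      rw [h, (hgid n).eq] at horth'
      exact hgne n horth'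
    refine ⟨Set.range g, Set.infinite_range_of_injective hginj, ?_, ?_⟩
    · rintro e ⟨n, rfl⟩
      exact ⟨hgid n, hgne n⟩
    · rintro e ⟨m, rfl⟩ e' ⟨n, rfl⟩ hne'
      have hmn : m ≠ n := fun h => hne' (by rw [h])
      rcases hmn.lt_or_gt with h | h
      · exact ⟨(horth m n h).1, (horth m n h).2⟩
      · exact ⟨(horth n m h).2, (horth n m h).1⟩
  · -- infinite orthogonal set ⟹ descending chain
    rintro ⟨S, hSinf, hSprop, hSorth⟩
    set emb := Set.Infinite.natEmbedding S hSinf with hemb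
    set e : ℕ → E := fun n => (emb n : E) with he
    have hmem : ∀ n, e n ∈ S := fun n => (emb n).2
    have heinj : Function.Injective e := fun m n h => emb.injective (Subtype.ext h)
    have heid : ∀ n, IsIdempotentElem (e n) := fun n => (hSprop _ (hmem n)).1
    have hene : ∀ n, e n ≠ 0 := fun n => (hSprop _ (hmem n)).2
    have horth : ∀ m n, m ≠ n → e m * e n = 0 := fun m n h =>
      (hSorth _ (hmem m) _ (hmem n) (fun he' => h (heinj he'))).1
    set s : ℕ → E := fun n => ∑ k ∈ Finset.range n, e k with hs
    have hse : ∀ n, s n * e n = 0 := by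
      intro n
      show (∑ k ∈ Finset.range n, e k) * e n = 0
      rw [Finset.sum_mul]
      exact Finset.sum_eq_zero fun k hk => horth k n (Finset.mem_range.mp hk).ne
    have hes : ∀ n, e n * s n = 0 := by
      intro n
      show e n * (∑ k ∈ Finset.range n, e k) = 0
      rw [Finset.mul_sum]
      exact Finset.sum_eq_zero fun k hk => horth n k (Finset.mem_range.mp hk).ne'
    have hstep : ∀ n, s (n + 1) = s n + e n := fun n => Finset.sum_range_succ e n
    have hsid : ∀ n, s n * s n = s n := by
      intro n
      induction n with
      | zero => simp [hs]
      | succ n ih =>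
        rw [hstep n, add_mul, mul_add, mul_add, ih, hse n, hes n, (heid n).eq]
        abel
    have hss : ∀ n, s (n + 1) * s n = s n ∧ s n * s (n + 1) = s n := by
      intro n
      constructor
      · rw [hstep n, add_mul, hsid n, hes n, add_zero]
      · rw [hstep n, mul_add, hsid n, hse n, add_zero]
    refine ⟨fun n => 1 - s n, ?_, ?_, ?_⟩
    · intro n
      show (1 - s n) * (1 - s n) = 1 - s n
      rw [sub_mul, one_mul, mul_sub, mul_one, hsid n]
      abel
    · intro n
      constructor
      · show (1 - s (n + 1)) * (1 - s n) = 1 - s (n + 1)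
        rw [sub_mul, one_mul, mul_sub, mul_one, (hss n).1]
        abel
      · show (1 - s n) * (1 - s (n + 1)) = 1 - s (n + 1)
        rw [sub_mul, one_mul, mul_sub, mul_one, (hss n).2]
        abel
    · intro n h
      have h1 : s (n + 1) = s n := sub_right_injective h
      have h2 : s n + e n = s n := by rw [← hstep n]; exact h1
      exact hene n (add_eq_left.mp h2)
end

section
/- If a module M satisfies the descending chain condition on direct summands, then every direct sum decomposition of M refines into a finite direct sum decomposition into indecomposable modules. -/
/-- `N` is a direct summand of the module `M`. -/
def IsSummand {R : Type*} [Ring R] {M : Type*} [AddCommGroup M] [Module R M]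
    (N : Submodule R M) : Prop :=
  ∃ N', IsCompl N N'

/-- `N` is an indecomposable submodule: it is nonzero and is not the internal direct sum of
two nonzero submodules. -/
def IsIndecomp {R : Type*} [Ring R] {M : Type*} [AddCommGroup M] [Module R M]
    (N : Submodule R M) : Prop :=
  N ≠ ⊥ ∧ ∀ A B : Submodule R M, A ⊔ B = N → A ⊓ B = ⊥ → A = ⊥ ∨ B = ⊥

section Aux

variable {R : Type*} [Ring R] {M : Type*} [AddCommGroup M] [Module R M]

lemma aux_summand_split {N A B : Submodule R M} (hN : IsSummand N)
    (hAB : A ⊔ B = N) (hd : A ⊓ B = ⊥) : IsSummand A := by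
  obtain ⟨N', hc⟩ := hN
  exact ⟨B ⊔ N', (disjoint_iff.mpr hd).isCompl_sup_right_of_isCompl_sup_left (hAB ▸ hc)⟩

lemma aux_indep_sum_elim {κ₁ κ₂ : Type*} {g₁ : κ₁ → Submodule R M} {g₂ : κ₂ → Submodule R M}
    (h₁ : iSupIndep g₁) (h₂ : iSupIndep g₂) (hAB : Disjoint (iSup g₁) (iSup g₂)) :
    iSupIndep (Sum.elim g₁ g₂) := by
  intro i
  cases i with
  | inl a =>
    have key : Disjoint (g₁ a) ((⨆ b, ⨆ _ : b ≠ a, g₁ b) ⊔ iSup g₂) := by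
      refine (h₁ a).disjoint_sup_right_of_disjoint_sup_left (hAB.mono_left ?_)
      exact sup_le (le_iSup _ _) (iSup₂_le fun b _ => le_iSup _ _)
    refine key.mono_right (iSup₂_le fun j hj => ?_)
    cases j with
    | inl b => exact le_sup_left.trans' (le_iSup₂_of_le b (fun h => hj (by simp [h])) le_rfl)
    | inr b => exact le_sup_right.trans' (le_iSup g₂ b)
  | inr a =>
    have key : Disjoint (g₂ a) ((⨆ b, ⨆ _ : b ≠ a, g₂ b) ⊔ iSup g₁) := by
      refine (h₂ a).disjoint_sup_right_of_disjoint_sup_left (hAB.symm.mono_left ?_)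
      exact sup_le (le_iSup _ _) (iSup₂_le fun b _ => le_iSup _ _)
    refine key.mono_right (iSup₂_le fun j hj => ?_)
    cases j with
    | inl b => exact le_sup_right.trans' (le_iSup g₁ b)
    | inr b => exact le_sup_left.trans' (le_iSup₂_of_le b (fun h => hj (by simp [h])) le_rfl)

lemma aux_indep_subsingleton {κ : Type*} [Subsingleton κ] (g : κ → Submodule R M) :
    iSupIndep g := by
  intro i
  have : (⨆ j, ⨆ _ : j ≠ i, g j) = ⊥ :=
    iSup_eq_bot.mpr fun j => iSup_eq_bot.mpr fun h => absurd (Subsingleton.elim j i) h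
  rw [this]
  exact disjoint_bot_right

/-- "Good": has a finite decomposition into indecomposables. -/
def AuxGood (N : Submodule R M) : Prop :=
  ∃ (k : ℕ) (g : Fin k → Submodule R M),
    iSupIndep g ∧ iSup g = N ∧ ∀ j, IsIndecomp (g j)

lemma aux_good_bot : AuxGood (⊥ : Submodule R M) :=
  ⟨0, Fin.elim0, aux_indep_subsingleton _, by simp, fun j => j.elim0⟩

lemma aux_good_of_indecomp {N : Submodule R M} (h : IsIndecomp N) : AuxGood N :=
  ⟨1, fun _ => N, aux_indep_subsingleton _, iSup_const, fun _ => h⟩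

lemma aux_good_sup {A B : Submodule R M} (hd : A ⊓ B = ⊥)
    (hA : AuxGood A) (hB : AuxGood B) : AuxGood (A ⊔ B) := by
  obtain ⟨k₁, g₁, h₁, hs₁, hi₁⟩ := hA
  obtain ⟨k₂, g₂, h₂, hs₂, hi₂⟩ := hB
  refine ⟨k₁ + k₂, Sum.elim g₁ g₂ ∘ finSumFinEquiv.symm, ?_, ?_, ?_⟩
  · exact (aux_indep_sum_elim h₁ h₂ (by rw [hs₁, hs₂]; exact disjoint_iff.mpr hd)).comp
      finSumFinEquiv.symm.injective
  · rw [show iSup (Sum.elim g₁ g₂ ∘ finSumFinEquiv.symm)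
        = iSup (Sum.elim g₁ g₂) from finSumFinEquiv.symm.iSup_comp, iSup_sum]
    simp [hs₁, hs₂]
  · intro j
    rcases h : finSumFinEquiv.symm j with a | a
    · simpa [Function.comp, h] using hi₁ a
    · simpa [Function.comp, h] using hi₂ a

lemma aux_decomp
    (hM : ¬ ∃ f : ℕ → Submodule R M, (∀ n, IsSummand (f n)) ∧ ∀ n, f (n + 1) < f n)
    (N : Submodule R M) (hN : IsSummand N) : AuxGood N := by
  by_contra hbad
  have key : ∀ N : Submodule R M, IsSummand N → ¬ AuxGood N →
      ∃ N', (IsSummand N' ∧ ¬ AuxGood N') ∧ N' < N := by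
    intro N hNs hNg
    have hNbot : N ≠ ⊥ := fun h => hNg (h ▸ aux_good_bot)
    have hNind : ¬ IsIndecomp N := fun h => hNg (aux_good_of_indecomp h)
    rw [IsIndecomp, not_and] at hNind
    push_neg at hNind
    obtain ⟨A, B, hAB, hABd, hA, hB⟩ := hNind hNbot
    have hAs : IsSummand A := aux_summand_split hNs hAB hABd
    have hBs : IsSummand B := aux_summand_split hNs (sup_comm A B ▸ hAB) (by rwa [inf_comm])
    have hAlt : A < N := by
      refine lt_of_le_of_ne (hAB ▸ le_sup_left) fun h => hB ?_
      have : B ≤ A := h ▸ hAB ▸ le_sup_right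
      exact (inf_eq_right.mpr this).symm.trans hABd
    have hBlt : B < N := by
      refine lt_of_le_of_ne (hAB ▸ le_sup_right) fun h => hA ?_
      have : A ≤ B := h ▸ hAB ▸ le_sup_left
      exact (inf_eq_left.mpr this).symm.trans hABd
    by_cases hAg : AuxGood A
    · by_cases hBg : AuxGood B
      · exact absurd (hAB ▸ aux_good_sup hABd hAg hBg) hNg
      · exact ⟨B, ⟨hBs, hBg⟩, hBlt⟩
    · exact ⟨A, ⟨hAs, hAg⟩, hAlt⟩
  choose! F hF1 hF2 using fun N (h : IsSummand N ∧ ¬ AuxGood N) => key N h.1 h.2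
  apply hM
  let seq : ℕ → {N : Submodule R M // IsSummand N ∧ ¬ AuxGood N} := fun n =>
    Nat.rec ⟨N, hN, hbad⟩ (fun _ p => ⟨F p.1, hF1 p.1 p.2⟩) n
  refine ⟨fun n => (seq n).1, fun n => (seq n).2.1, fun n => ?_⟩
  exact hF2 (seq n).1 (seq n).2

end Aux

/-- If `M` satisfies the descending chain condition on direct summands, then every direct
sum decomposition of `M` refines into a finite direct sum decomposition into indecomposable
modules: the index set is finite and every summand admits a finite direct sum decomposition
into indecomposables. -/
theorem refines_into_finite_indecomposable_of_dcc {R : Type*} [Ring R] {M : Type*}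
    [AddCommGroup M] [Module R M]
    (hM : ¬ ∃ f : ℕ → Submodule R M, (∀ n, IsSummand (f n)) ∧ ∀ n, f (n + 1) < f n)
    (ι : Type*) (f : ι → Submodule R M) (hind : iSupIndep f) (hsup : iSup f = ⊤)
    (hne : ∀ i, f i ≠ ⊥) :
    Finite ι ∧ ∀ i, ∃ (k : ℕ) (g : Fin k → Submodule R M),
      iSupIndep g ∧ iSup g = f i ∧ ∀ j, IsIndecomp (g j) := by
  constructor
  · by_contra hfin
    have : Infinite ι := not_finite_iff_infinite.mp hfin
    obtain ⟨e, he⟩ := Infinite.natEmbedding ι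
    apply hM
    set S : ℕ → Submodule R M := fun n => ⨆ i, ⨆ _ : (∀ k < n, i ≠ e k), f i with hS
    have hS0 : S 0 = ⊤ := by
      rw [← hsup]
      exact le_antisymm (iSup₂_le fun i _ => le_iSup f i)
        (iSup_le fun i => le_iSup₂_of_le i (fun k hk => absurd hk (Nat.not_lt_zero k)) le_rfl)
    have hmono : ∀ n, S (n + 1) ≤ S n := fun n =>
      iSup₂_le fun i hi => le_iSup₂_of_le i (fun k hk => hi k (hk.trans (Nat.lt_succ_self n)))
        le_rfl
    have hfn : ∀ n, f (e n) ≤ S n := fun n =>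
      le_iSup₂_of_le (e n) (fun k hk h => absurd (he h) (Nat.ne_of_gt hk)) le_rfl
    have hdisj : ∀ n, Disjoint (f (e n)) (S (n + 1)) := fun n =>
      (hind (e n)).mono_right
        (iSup₂_le fun i hi => le_iSup₂_of_le i (hi n (Nat.lt_succ_self n)) le_rfl)
    have hstep : ∀ n, S (n + 1) ⊔ f (e n) = S n := by
      intro n
      refine le_antisymm (sup_le (hmono n) (hfn n)) (iSup₂_le fun i hi => ?_)
      by_cases h : i = e n
      · exact h ▸ le_sup_right
      · refine le_sup_left.trans' (le_iSup₂_of_le i (fun k hk => ?_) le_rfl)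
        rcases Nat.lt_succ_iff_lt_or_eq.mp hk with hk' | rfl
        · exact hi k hk'
        · exact h
    have hsummand : ∀ n, IsSummand (S n) := by
      intro n
      induction n with
      | zero => exact hS0 ▸ ⟨⊥, isCompl_top_bot⟩
      | succ m ih =>
        exact aux_summand_split ih (hstep m) ((hdisj m).symm.eq_bot)
    refine ⟨S, hsummand, fun n => lt_of_le_of_ne (hmono n) fun h => hne (e n) ?_⟩
    exact ((hdisj n).symm.eq_bot_of_ge (h ▸ hfn n))
  · intro i
    refine aux_decomp hM (f i) ⟨⨆ j, ⨆ _ : j ≠ i, f j, hind i, ?_⟩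
    rw [codisjoint_iff]
    refine le_antisymm le_top ?_
    rw [← hsup]
    refine iSup_le fun j => ?_
    by_cases h : j = i
    · exact h ▸ le_sup_left
    · exact le_sup_right.trans' (le_iSup₂_of_le j h le_rfl)
end

section
/- Let Ω be a class of modules closed under finite direct sums and containing the zero module. If M satisfies the descending chain condition on direct summands, then there exists a direct sum decomposition M = A ⊕ B such that A ∈ Ω and B has no nonzero direct summand belonging to Ω. -/
/-- `K` is a direct summand of the submodule `N`. -/
def IsSummandIn {R : Type*} [Ring R] {M : Type*} [AddCommGroup M] [Module R M]
    (K N : Submodule R M) : Prop :=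
  K ≤ N ∧ ∃ K', K' ≤ N ∧ K ⊓ K' = ⊥ ∧ K ⊔ K' = N

/-- Let `Ω` be a class of modules (here realized as an isomorphism-invariant predicate on
submodules of `M`) containing the zero module and closed under finite (internal) direct
sums. If `M` satisfies the descending chain condition on direct summands, then
`M = A ⊕ B` with `A ∈ Ω` and `B` having no nonzero direct summand in `Ω`. -/
theorem exists_decomposition_class_of_dcc {R : Type*} [Ring R] {M : Type*} [AddCommGroup M]
    [Module R M] (Ω : Submodule R M → Prop)
    (hzero : Ω ⊥)
    (hiso : ∀ A B : Submodule R M, (A ≃ₗ[R] B) → Ω A → Ω B)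
    (hsum : ∀ A B : Submodule R M, Ω A → Ω B → A ⊓ B = ⊥ → Ω (A ⊔ B))
    (hM : ¬ ∃ f : ℕ → Submodule R M, (∀ n, IsSummand (f n)) ∧ ∀ n, f (n + 1) < f n) :
    ∃ A B : Submodule R M, IsCompl A B ∧ Ω A ∧
      ∀ K : Submodule R M, IsSummandIn K B → Ω K → K = ⊥ := by
  by_contra hcon
  push_neg at hcon
  -- hcon : ∀ A B, IsCompl A B → Ω A → ∃ K, IsSummandIn K B ∧ Ω K ∧ K ≠ ⊥
  set P : Submodule R M → Prop := fun B => ∃ A, IsCompl A B ∧ Ω A with hP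
  have step : ∀ B : Submodule R M, P B → ∃ B', P B' ∧ B' < B := by
    rintro B ⟨A, hAB, hΩA⟩
    obtain ⟨K, ⟨hKB, K', hK'B, hinf, hsup⟩, hΩK, hKne⟩ := hcon A B hAB hΩA
    have hAK : A ⊓ K = ⊥ := by
      rw [eq_bot_iff]
      intro x hx
      exact hAB.disjoint.le_bot ⟨hx.1, hKB hx.2⟩
    refine ⟨K', ⟨A ⊔ K, ?_, hsum A K hΩA hΩK hAK⟩, ?_⟩
    · constructor
      · rw [disjoint_iff, eq_bot_iff]
        intro x ⟨hx1, hx2⟩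
        obtain ⟨a, ha, k, hk, rfl⟩ := Submodule.mem_sup.mp hx1
        have haB : a ∈ B := by
          have : a = (a + k) - k := by abel
          rw [this]
          exact sub_mem (hK'B hx2) (hKB hk)
        have ha0 : a = 0 := by
          have := hAB.disjoint.le_bot ⟨ha, haB⟩
          simpa using this
        subst ha0
        simp only [zero_add] at hx2 ⊢
        have : k ∈ K ⊓ K' := ⟨hk, hx2⟩
        rw [hinf] at this
        simpa using this
      · rw [codisjoint_iff, sup_assoc, hsup, ← codisjoint_iff]
        exact hAB.codisjoint
    · refine lt_of_le_of_ne hK'B fun h => hKne ?_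
      have hKK' : K ≤ K' := h ▸ hKB
      rw [← hinf, inf_eq_left.mpr hKK']
  -- build an infinite descending chain
  have h0 : P ⊤ := ⟨⊥, isCompl_bot_top, hzero⟩
  have step' : ∀ x : {B : Submodule R M // P B}, ∃ y : {B // P B}, y.val < x.val := by
    rintro ⟨B, hB⟩
    obtain ⟨B', hB', hlt⟩ := step B hB
    exact ⟨⟨B', hB'⟩, hlt⟩
  choose g hg using step'
  let seq : ℕ → {B : Submodule R M // P B} := fun n => g^[n] ⟨⊤, h0⟩
  refine hM ⟨fun n => (seq n).val, fun n => ?_, fun n => ?_⟩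
  · obtain ⟨A, hA, _⟩ := (seq n).2
    exact ⟨A, hA.symm⟩
  · have h : seq (n + 1) = g (seq n) := Function.iterate_succ_apply' g n _
    show (seq (n+1)).val < (seq n).val
    rw [h]
    exact hg (seq n)
end

section
/- Let M be a module whose poset of direct summands has deviation (in the sense of Krull dimension of posets). Then every direct sum decomposition of M is finite (has only finitely many nonzero summands). -/
universe v

/-- `DevLE S o` says the subposet `S` of `P` has deviation at most `o` (where deviation
`-1`, i.e. `S` discrete, is allowed): for every descending chain in `S`, all but finitely
many of the consecutive intervals are discrete or have deviation `< o`. -/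
def DevLE {P : Type*} [Preorder P] (S : Set P) (o : Ordinal.{v}) : Prop :=
  ∀ f : ℕ → P, (∀ n, f n ∈ S) → (∀ n, f (n + 1) ≤ f n) →
    ∃ N : ℕ, ∀ n ≥ N,
      (∀ a ∈ S ∩ Set.Icc (f (n + 1)) (f n), ∀ b ∈ S ∩ Set.Icc (f (n + 1)) (f n),
        a ≤ b → a = b) ∨
      ∃ o' : Ordinal.{v}, ∃ _ : o' < o, DevLE (S ∩ Set.Icc (f (n + 1)) (f n)) o'
termination_by o

/-!
If `s` were infinite, pick distinct `N₀, N₁, …` in `s`. For `T ⊆ ℕ`, the sum of all members of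
`s` other than the `Nᵢ` with `i ∉ T` is a direct summand (its complement is the sum of those
`Nᵢ`), and `T ↦` this summand is strictly monotone. So the summands contain a strictly monotone
copy of `(Set ℕ, ⊆)`, which has no deviation: cutting `ℕ` into infinitely many infinite columns,
the chain `Tₙ = ⋃_{m ≥ n} columnₘ` descends and each interval `[Tₙ₊₁, Tₙ]` contains a strictly
monotone copy of `Set ℕ` again, so induction on the ordinal rules out every bound.
-/

theorem not_devLE_of_strictMono {P : Type*} [Preorder P] {S : Set P} {g : Set ℕ → P}
    (hg : StrictMono g) (hS : ∀ T, g T ∈ S) (o : Ordinal.{v}) : ¬ DevLE S o := by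
  induction o using WellFoundedLT.induction generalizing S g with
  | _ o IH =>
  intro hdev
  rw [DevLE] at hdev
  let T : ℕ → Set ℕ := fun n => {m | n ≤ (Nat.unpair m).1}
  have hT : Antitone T := fun _ _ hnn' _ hm => hnn'.trans hm
  obtain ⟨N, hN⟩ := hdev (fun n => g (T n)) (fun _ => hS _) (fun n => hg.monotone (hT n.le_succ))
  have hcol : ∀ k, Nat.pair N k ∈ T N \ T (N + 1) := fun k => by
    simp [T, Nat.unpair_pair]
  let φ : Set ℕ → Set ℕ := fun U => T (N + 1) ∪ Nat.pair N '' U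
  have hφ : StrictMono φ := by
    refine Monotone.strictMono_of_injective
      (fun U U' hUU' => Set.union_subset_union_right _ (Set.image_mono hUU')) fun U U' hUU' => ?_
    have hdisj : ∀ U, Disjoint (T (N + 1)) (Nat.pair N '' U) :=
      fun U => Set.disjoint_right.2 fun _ ⟨k, _, hk⟩ => hk ▸ (hcol k).2
    have hpair : Function.Injective (Nat.pair N) := fun _ _ h => (Nat.pair_eq_pair.1 h).2
    apply Set.image_injective.2 hpair
    rw [← (hdisj U).sup_sdiff_cancel_left, ← (hdisj U').sup_sdiff_cancel_left]
    exact congrArg (· \ T (N + 1)) hUU'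
  have hgφ : ∀ U, g (φ U) ∈ S ∩ Set.Icc (g (T (N + 1))) (g (T N)) := fun U =>
    ⟨hS _, hg.monotone Set.subset_union_left, hg.monotone <|
      Set.union_subset (hT N.le_succ) (Set.image_subset_iff.2 fun k _ => (hcol k).1)⟩
  rcases hN N le_rfl with hdisc | ⟨o', ho', hdev'⟩
  · have hlt : g (φ ∅) < g (φ Set.univ) := (hg.comp hφ) (Set.empty_ssubset.2 Set.univ_nonempty)
    exact hlt.ne (hdisc _ (hgφ _) _ (hgφ _) hlt.le)
  · exact IH o' ho' (hg.comp hφ) hgφ hdev'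

theorem iSupIndep.strictMono_biSup {ι α : Type*} [CompleteLattice α] {t : ι → α}
    (ht : iSupIndep t) (hne : ∀ i, t i ≠ ⊥) : StrictMono fun A : Set ι => ⨆ i ∈ A, t i := by
  intro A B hAB
  obtain ⟨x, hxB, hxA⟩ := Set.exists_of_ssubset hAB
  refine lt_of_le_of_ne (biSup_mono hAB.subset) fun heq => hne x ?_
  exact (ht.disjoint_biSup hxA).eq_bot_of_le ((le_biSup t hxB).trans_eq heq.symm)

theorem iSupIndep.isCompl_biSup_compl {ι α : Type*} [CompleteLattice α] [IsModularLattice α]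
    [IsCompactlyGenerated α] {t : ι → α} (ht : iSupIndep t) (htop : ⨆ i, t i = ⊤) (A : Set ι) :
    IsCompl (⨆ i ∈ A, t i) (⨆ i ∈ Aᶜ, t i) :=
  ⟨ht.disjoint_biSup_biSup disjoint_compl_right,
    codisjoint_iff.2 (by rw [← iSup_union, Set.union_compl_self, iSup_univ, htop])⟩

/-- If the poset of direct summands of `M` (ordered by inclusion) has deviation, then every
direct sum decomposition of `M` has only finitely many nonzero summands. -/
theorem decomposition_finite_of_hasDev {R : Type*} [Ring R] {M : Type*} [AddCommGroup M]
    [Module R M]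
    (hdev : ∃ o : Ordinal.{v},
      DevLE (Set.univ : Set {N : Submodule R M // IsSummand N}) o)
    (s : Set (Submodule R M)) (hind : sSupIndep s) (hsup : sSup s = ⊤) (hbot : ⊥ ∉ s) :
    s.Finite := by
  obtain ⟨o, hdev⟩ := hdev
  by_contra hinf
  have ht : iSupIndep ((↑) : s → Submodule R M) := (sSupIndep_iff s).mp hind
  have htop : ⨆ N : s, (N : Submodule R M) = ⊤ := by rwa [← sSup_eq_iSup']
  have hne : ∀ N : s, (N : Submodule R M) ≠ ⊥ := fun N h => hbot (h ▸ N.2)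
  let e : ℕ ↪ s := Set.Infinite.natEmbedding s hinf
  have he : StrictMono fun T : Set ℕ => (e '' Tᶜ)ᶜ :=
    (compl_strictAnti _).comp (e.injective.image_strictMono.comp_strictAnti (compl_strictAnti _))
  let g : Set ℕ → {N : Submodule R M // IsSummand N} := fun T =>
    ⟨⨆ N ∈ (e '' Tᶜ)ᶜ, N, _, ht.isCompl_biSup_compl htop _⟩
  exact not_devLE_of_strictMono (g := g) (fun _ _ h => ht.strictMono_biSup hne (he h))
    (fun _ => Set.mem_univ _) o hdev
end

section
/- Let M be a module. If the poset of direct summands of M has deviation α, then its dual poset also has deviation, and the two deviations are equal. -/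
universe v

/-! Everything happens among the complemented elements of a bounded modular lattice. If
`a ≤ b` are complemented and `d ≤ c` are complements of `b` and `a` respectively, then
`e = b ⊓ c` is a relative complement both of `a` in `b` and of `d` in `c`, and `y ↦ a ⊔ y`,
`y ↦ d ⊔ y` identify the complemented elements below `e` with those of `[a, b]` and of `[d, c]`.
So an ascending chain of complemented elements and a descending chain of complements chosen along
it have order-isomorphic consecutive intervals, and induction on the ordinal carries a deviation
bound from the poset to its dual; the converse is the same statement for the dual lattice. -/

open Set OrderDual

section Deviation

variable {P Q : Type*} [Preorder P] [Preorder Q]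

/-- Deviation `< o`, where an antichain has deviation `-1`. -/
def DevLT (S : Set P) (o : Ordinal.{v}) : Prop :=
  IsAntichain (· ≤ ·) S ∨ ∃ o' < o, DevLE S o'

theorem isAntichain_le_iff {S : Set P} :
    IsAntichain (· ≤ ·) S ↔ ∀ a ∈ S, ∀ b ∈ S, a ≤ b → a = b := by
  refine forall₂_congr fun a _ => forall₂_congr fun b _ => ?_
  exact not_imp_not

theorem devLE_iff {S : Set P} {o : Ordinal.{v}} :
    DevLE S o ↔ ∀ f : ℕ → P, (∀ n, f n ∈ S) → (∀ n, f (n + 1) ≤ f n) →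
      ∃ N, ∀ n ≥ N, DevLT (S ∩ Icc (f (n + 1)) (f n)) o := by
  rw [DevLE]
  simp only [DevLT, isAntichain_le_iff, exists_prop]

theorem image_inter_Icc (g : P ↪o Q) (S : Set P) (a b : P) :
    g '' S ∩ Icc (g a) (g b) = g '' (S ∩ Icc a b) := by
  ext x
  constructor
  · rintro ⟨⟨y, hy, rfl⟩, hay, hyb⟩
    exact ⟨y, ⟨hy, g.le_iff_le.mp hay, g.le_iff_le.mp hyb⟩, rfl⟩
  · rintro ⟨y, ⟨hy, hay, hyb⟩, rfl⟩
    exact ⟨⟨y, hy, rfl⟩, g.monotone hay, g.monotone hyb⟩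

theorem devLE_image_iff (g : P ↪o Q) (S : Set P) (o : Ordinal.{v}) :
    DevLE (g '' S) o ↔ DevLE S o := by
  induction o using WellFoundedLT.induction generalizing S with
  | ind o IH =>
    have hLT : ∀ T : Set P, DevLT (g '' T) o ↔ DevLT T o := fun T =>
      or_congr IsAntichain.image_embedding_iff
        (exists_congr fun o' => and_congr_right fun ho' => IH o' ho' T)
    rw [devLE_iff, devLE_iff]
    constructor
    · intro H f hfS hf
      obtain ⟨N, hN⟩ := H (g ∘ f) (fun n => mem_image_of_mem g (hfS n))
        (fun n => g.monotone (hf n))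
      refine ⟨N, fun n hn => (hLT _).mp ?_⟩
      simpa only [Function.comp, image_inter_Icc] using hN n hn
    · intro H f hfS hf
      choose f' hf'S hf' using hfS
      obtain ⟨N, hN⟩ := H f' hf'S (fun n => g.le_iff_le.mp (by simpa only [hf'] using hf n))
      refine ⟨N, fun n hn => ?_⟩
      rw [← hf', ← hf', image_inter_Icc]
      exact (hLT _).mpr (hN n hn)

theorem devLT_image_iff (g : P ↪o Q) (S : Set P) (o : Ordinal.{v}) :
    DevLT (g '' S) o ↔ DevLT S o :=
  or_congr IsAntichain.image_embedding_iff
    (exists_congr fun o' => and_congr_right fun _ => devLE_image_iff g S o')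

theorem devLE_univ_subtype_iff (p : P → Prop) (o : Ordinal.{v}) :
    DevLE (univ : Set (Subtype p)) o ↔ DevLE {x | p x} o := by
  rw [← devLE_image_iff (OrderEmbedding.subtype p), image_univ]
  simp

theorem devLE_univ_subtype_dual_iff (p : P → Prop) (o : Ordinal.{v}) :
    DevLE (univ : Set (Subtype p)ᵒᵈ) o ↔ DevLE (ofDual ⁻¹' {x | p x}) o := by
  rw [← devLE_image_iff (OrderEmbedding.subtype p).dual, image_univ]
  congr! 1
  ext x
  exact ⟨fun ⟨y, hy⟩ => hy ▸ y.2, fun hx => ⟨⟨_, hx⟩, rfl⟩⟩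

theorem OrderEmbedding.image_dual (g : P ↪o Q) (S : Set P) :
    g.dual '' (ofDual ⁻¹' S) = ofDual ⁻¹' (g '' S) :=
  rfl

end Deviation

section Complemented

variable {α : Type*} [Lattice α] [BoundedOrder α]

theorem isComplemented_toDual_iff {a : α} :
    IsComplemented (toDual a) ↔ IsComplemented a :=
  ⟨fun ⟨b, hb⟩ => ⟨ofDual b, isCompl_toDual_iff.mp hb⟩,
    fun ⟨b, hb⟩ => ⟨toDual b, isCompl_toDual_iff.mpr hb⟩⟩

theorem setOf_isComplemented_dual :
    {x : αᵒᵈ | IsComplemented x} = ofDual ⁻¹' {x | IsComplemented x} :=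
  ext fun _ => isComplemented_toDual_iff.symm

variable [IsModularLattice α] {a b c e : α}

theorem Disjoint.isComplemented_of_sup (hab : Disjoint a b) (h : IsComplemented (a ⊔ b)) :
    IsComplemented a :=
  let ⟨c, hc⟩ := h
  ⟨b ⊔ c, hab.isCompl_sup_right_of_isCompl_sup_left hc⟩

theorem Set.Iic.isComplemented_of_coe {y : Set.Iic e} (hy : IsComplemented (y : α)) :
    IsComplemented y := by
  obtain ⟨y', hy'⟩ := hy
  have hey : (⟨e ⊓ y, inf_le_left⟩ : Set.Iic e) = y := Subtype.ext (inf_eq_right.mpr y.2)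
  exact ⟨_, hey ▸ Set.Iic.isCompl_inf_inf_of_isCompl_of_le hy' y.2⟩

theorem IsCompl.sup_inf_eq (hac : IsCompl a c) (hab : a ≤ b) : a ⊔ b ⊓ c = b := by
  rw [inf_comm, ← sup_inf_assoc_of_le c hab, hac.sup_eq_top, top_inf_eq]

theorem exists_isCompl_le_of_le (hac : IsCompl a c) (hab : a ≤ b) (hb : IsComplemented b) :
    ∃ d ≤ c, IsCompl b d := by
  have hcb : IsComplemented (c ⊓ b) := by
    refine (hac.disjoint.mono_right inf_le_left).symm.isComplemented_of_sup ?_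
    rwa [sup_comm, inf_comm, hac.sup_inf_eq hab]
  obtain ⟨z, hz⟩ := Set.Iic.isComplemented_of_coe (y := ⟨c ⊓ b, inf_le_left⟩) hcb
  obtain ⟨hdis, hsup⟩ := Set.Iic.isCompl_iff.mp hz
  refine ⟨z, z.2, disjoint_iff_inf_le.mpr ?_, codisjoint_iff.mpr (top_le_iff.mp ?_)⟩
  · calc b ⊓ z ≤ c ⊓ b ⊓ z :=
          le_inf (le_inf (inf_le_right.trans z.2) inf_le_left) inf_le_right
      _ = ⊥ := hdis.eq_bot
  · calc ⊤ = a ⊔ c := hac.sup_eq_top.symm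
      _ = a ⊔ (c ⊓ b ⊔ z) := by rw [hsup]
      _ ≤ b ⊔ z := sup_le (hab.trans le_sup_left) (sup_le_sup_right inf_le_right _)

theorem exists_antitone_isCompl {g : ℕ → α} (hg : Monotone g)
    (hgc : ∀ n, IsComplemented (g n)) :
    ∃ C : ℕ → α, Antitone C ∧ ∀ n, IsCompl (g n) (C n) := by
  choose next hle hnext using fun n c (h : IsCompl (g n) c) =>
    exists_isCompl_le_of_le h (hg n.le_succ) (hgc (n + 1))
  let F : ∀ n, {c // IsCompl (g n) c} := fun n =>
    Nat.rec ⟨_, (hgc 0).choose_spec⟩ (fun n c => ⟨next n c c.2, hnext n c c.2⟩) n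
  exact ⟨fun n => (F n).1, antitone_nat_of_succ_le fun n => hle n _ _, fun n => (F n).2⟩

def Disjoint.supIicEmbedding (hae : Disjoint a e) : Iic e ↪o α :=
  OrderEmbedding.ofMapLEIff (fun y => a ⊔ y) fun y z => by
    refine ⟨fun h => ?_, fun h => sup_le_sup_left (Subtype.coe_le_coe.mpr h) a⟩
    have cancel : ∀ w : Iic e, (a ⊔ w) ⊓ e = w := fun w => by
      rw [sup_comm, sup_inf_assoc_of_le a w.2, hae.eq_bot, sup_bot_eq]
    exact (cancel y).symm.le.trans ((inf_le_inf_right e h).trans (cancel z).le)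

theorem Disjoint.image_supIicEmbedding (hae : Disjoint a e) (h : IsComplemented (a ⊔ e)) :
    hae.supIicEmbedding '' {y | IsComplemented y} = {x | IsComplemented x} ∩ Icc a (a ⊔ e) := by
  ext x
  constructor
  · rintro ⟨y, ⟨z, hz⟩, rfl⟩
    obtain ⟨hdis, hsup⟩ := Set.Iic.isCompl_iff.mp hz
    refine ⟨(hdis.disjoint_sup_left_of_disjoint_sup_right (by rwa [hsup])).isComplemented_of_sup
      ?_, le_sup_left, sup_le_sup_left y.2 a⟩
    rwa [sup_assoc, hsup]
  · rintro ⟨hx, hax, hxe⟩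
    have hsup : a ⊔ x ⊓ e = x := by
      rw [inf_comm, ← sup_inf_assoc_of_le e hax, inf_eq_right.mpr hxe]
    refine ⟨⟨x ⊓ e, inf_le_right⟩, Set.Iic.isComplemented_of_coe ?_, hsup⟩
    refine (hae.symm.mono_left inf_le_right).isComplemented_of_sup ?_
    rwa [sup_comm, hsup]

end Complemented

section Main

variable {α : Type*} [Lattice α] [BoundedOrder α] [IsModularLattice α] {a b c d : α}
  {o : Ordinal.{v}}

theorem devLT_Icc_iff_of_isCompl (hbd : IsCompl b d) (hdc : d ≤ c) (hc : IsComplemented c) :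
    DevLT ({x | IsComplemented x} ∩ Icc d c) o ↔
      DevLT {y : Iic (b ⊓ c) | IsComplemented y} o := by
  have hdis : Disjoint d (b ⊓ c) := hbd.symm.disjoint.mono_right inf_le_left
  have hsup : d ⊔ b ⊓ c = c := by rw [inf_comm, hbd.symm.sup_inf_eq hdc]
  rw [← devLT_image_iff hdis.supIicEmbedding, hdis.image_supIicEmbedding (by rwa [hsup]), hsup]

theorem devLT_dual_Icc_iff_of_isCompl (hac : IsCompl a c) (hab : a ≤ b) (hb : IsComplemented b) :
    DevLT ({x : αᵒᵈ | IsComplemented x} ∩ Icc (toDual b) (toDual a)) o ↔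
      DevLT {y : (Iic (b ⊓ c))ᵒᵈ | IsComplemented y} o := by
  have hdis : Disjoint a (b ⊓ c) := hac.disjoint.mono_right inf_le_right
  have hsup : a ⊔ b ⊓ c = b := hac.sup_inf_eq hab
  rw [← devLT_image_iff hdis.supIicEmbedding.dual, setOf_isComplemented_dual,
    setOf_isComplemented_dual, OrderEmbedding.image_dual,
    hdis.image_supIicEmbedding (by rwa [hsup]), hsup, Icc_toDual, preimage_inter]

theorem devLE_dual_of_devLE (h : DevLE {x : α | IsComplemented x} o) :
    DevLE {x : αᵒᵈ | IsComplemented x} o := by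
  induction o using WellFoundedLT.induction generalizing α with
  | ind o IH =>
    rw [devLE_iff] at h ⊢
    intro f hfS hf
    have hg : Monotone (ofDual ∘ f) := monotone_nat_of_le_succ hf
    obtain ⟨C, hC, hfC⟩ :=
      exists_antitone_isCompl hg fun n => isComplemented_toDual_iff.mp (hfS n)
    obtain ⟨N, hN⟩ := h C (fun n => ⟨_, (hfC n).symm⟩) fun n => hC n.le_succ
    refine ⟨N, fun n hn => ?_⟩
    have hE := (devLT_Icc_iff_of_isCompl (hfC (n + 1)) (hC n.le_succ) ⟨_, (hfC n).symm⟩).mp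
      (hN n hn)
    refine (devLT_dual_Icc_iff_of_isCompl (hfC n) (hg n.le_succ)
      (isComplemented_toDual_iff.mp (hfS (n + 1)))).mpr ?_
    rcases hE with hanti | ⟨o', ho', hdev⟩
    · left
      rw [setOf_isComplemented_dual]
      exact hanti.to_dual
    · exact Or.inr ⟨o', ho', IH o' ho' hdev⟩

theorem devLE_dual_iff :
    DevLE {x : αᵒᵈ | IsComplemented x} o ↔ DevLE {x : α | IsComplemented x} o :=
  ⟨devLE_dual_of_devLE, devLE_dual_of_devLE⟩

end Main

theorem setOf_isSummand {R : Type*} [Ring R] {M : Type*} [AddCommGroup M] [Module R M] :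
    {N : Submodule R M | IsSummand N} = {N | IsComplemented N} :=
  rfl

/-- If the poset `S(M)` of direct summands of `M` has deviation, then its dual poset also
has deviation and the two deviations are equal (the bounds `DevLE` coincide at every
ordinal, hence the least such ordinals agree). -/
theorem dev_dual_eq_dev {R : Type*} [Ring R] {M : Type*} [AddCommGroup M] [Module R M]
    (hdev : ∃ o : Ordinal.{v},
      DevLE (Set.univ : Set {N : Submodule R M // IsSummand N}) o) :
    (∃ o : Ordinal.{v},
      DevLE (Set.univ : Set ({N : Submodule R M // IsSummand N}ᵒᵈ)) o) ∧
    ∀ o : Ordinal.{v},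
      DevLE (Set.univ : Set {N : Submodule R M // IsSummand N}) o ↔
      DevLE (Set.univ : Set ({N : Submodule R M // IsSummand N}ᵒᵈ)) o := by
  have key : ∀ o : Ordinal.{v},
      DevLE (Set.univ : Set {N : Submodule R M // IsSummand N}) o ↔
      DevLE (Set.univ : Set ({N : Submodule R M // IsSummand N}ᵒᵈ)) o := fun o => by
    rw [devLE_univ_subtype_iff, devLE_univ_subtype_dual_iff, setOf_isSummand,
      ← setOf_isComplemented_dual]
    exact devLE_dual_iff.symm
  exact ⟨hdev.imp fun o => (key o).mp, key⟩
end

section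
/- A module M has finite Krull-Schmidt length (i.e., there is a finite bound on the cardinality of direct sum decompositions of M into nonzero summands) if and only if there exists n ≥ 1 such that every strictly descending chain of direct summands of M has length at most n. -/
/-- `s` is a direct sum decomposition of `M` into nonzero summands: an independent set of
nonzero submodules whose (direct) sum is all of `M`. -/
def IsDecomp {R : Type*} [Ring R] {M : Type*} [AddCommGroup M] [Module R M]
    (s : Set (Submodule R M)) : Prop :=
  sSupIndep s ∧ sSup s = ⊤ ∧ ⊥ ∉ s

open Set

theorem nonempty_fin_embedding_of_not_finite_ncard_le {α : Type*} {s : Set α} {m : ℕ}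
    (h : ¬ (s.Finite ∧ s.ncard ≤ m)) : Nonempty (Fin (m + 1) ↪ s) := by
  rw [← encard_le_coe_iff_finite_ncard_le, not_le,
    ← ENat.add_one_le_iff (ENat.natCast_ne_top m), ← toENat_cardinalMk, ← Nat.cast_succ,
    Cardinal.natCast_le_toENat] at h
  rw [← Cardinal.lift_mk_le', Cardinal.mk_fin]
  simpa using h

section Lattice

variable {α : Type*} [CompleteLattice α]

theorem sSupIndep.sSup_sdiff_lt_sSup_sdiff {s t u : Set α} (hs : sSupIndep s) (hbot : ⊥ ∉ s)
    (htu : t ⊂ u) (hus : u ⊆ s) : sSup (s \ u) < sSup (s \ t) := by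
  obtain ⟨x, hxu, hxt⟩ := exists_of_ssubset htu
  have hxs : x ∈ s := hus hxu
  have hx_le : x ≤ sSup (s \ t) := le_sSup ⟨hxs, hxt⟩
  have hx_disj : Disjoint x (sSup (s \ u)) :=
    hs.disjoint_sSup hxs sdiff_subset fun h => h.2 hxu
  refine (sSup_le_sSup (sdiff_subset_sdiff_right htu.subset)).lt_of_ne fun heq => hbot ?_
  rwa [← hx_disj.eq_bot_of_le (heq ▸ hx_le)]

variable [IsModularLattice α]

theorem sSupIndep.insert_of_disjoint {s : Set α} {x : α} (hs : sSupIndep s)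
    (hx : Disjoint x (sSup s)) : sSupIndep (insert x s) := by
  intro y hy
  rcases eq_or_ne y x with rfl | hyx
  · exact hx.mono_right (sSup_le_sSup (by simp))
  · have hys : y ∈ s := hy.resolve_left hyx
    have hrest : sSup (insert x s \ {y}) = x ⊔ sSup (s \ {y}) := by
      rw [insert_sdiff_of_notMem _ (mt mem_singleton_iff.1 hyx.symm), sSup_insert]
    rw [hrest, sup_comm]
    refine (hs hys).disjoint_sup_right_of_disjoint_sup_left ?_
    rwa [← sSup_insert, insert_sdiff_singleton, insert_eq_of_mem hys, disjoint_comm]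

theorem sSupIndep.disjoint_sSup_sSup_sdiff {s t : Set α} (hs : sSupIndep s) (ht : t.Finite)
    (hts : t ⊆ s) : Disjoint (sSup t) (sSup (s \ t)) := by
  induction t, ht using Set.Finite.induction_on with
  | empty => simp
  | @insert x t hxt _ ih =>
    have hxs : x ∈ s := hts (mem_insert x t)
    have ih := ih ((subset_insert x t).trans hts)
    rw [sSup_insert]
    refine (ih.mono_right (sSup_le_sSup (sdiff_subset_sdiff_right (subset_insert x t))))
      |>.disjoint_sup_left_of_disjoint_sup_right ((hs hxs).mono_right ?_)
    refine sup_le (sSup_le_sSup fun y hy => ⟨hts (mem_insert_of_mem x hy), ?_⟩)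
      (sSup_le_sSup (sdiff_subset_sdiff_right (by simp)))
    rintro rfl
    exact hxt hy

theorem sSupIndep.isCompl_sSup_sdiff {s t : Set α} (hs : sSupIndep s) (htop : sSup s = ⊤)
    (ht : t.Finite) (hts : t ⊆ s) : IsCompl (sSup (s \ t)) (sSup t) where
  disjoint := (hs.disjoint_sSup_sSup_sdiff ht hts).symm
  codisjoint := by rw [codisjoint_iff, ← sSup_union, sdiff_union_of_subset hts, htop]

/-- The chain `i ↦ sSup (s \ {e 0, …, e i})`. -/
theorem sSupIndep.exists_strictAnti_of_embedding {s : Set α} {m : ℕ} (hs : sSupIndep s)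
    (htop : sSup s = ⊤) (hbot : ⊥ ∉ s) (e : Fin (m + 1) ↪ s) :
    ∃ f : Fin (m + 1) → α, (∀ i, ∃ c, IsCompl (f i) c) ∧ StrictAnti f := by
  let t : Fin (m + 1) → Set α := fun i => (Subtype.val ∘ e) '' Iic i
  have ht_mono : StrictMono t :=
    (Subtype.val_injective.comp e.injective).image_strictMono.comp fun _ _ h => Iic_ssubset_Iic.2 h
  have hts : ∀ i, t i ⊆ s := by
    rintro i _ ⟨j, -, rfl⟩
    exact (e j).2
  exact ⟨fun i => sSup (s \ t i),
    fun i => ⟨_, hs.isCompl_sSup_sdiff htop ((finite_Iic i).image _) (hts i)⟩,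
    fun i j hij => hs.sSup_sdiff_lt_sSup_sdiff hbot (ht_mono hij) (hts j)⟩

/-- The witness is `d = c ⊓ a`, for which the modular law gives `a = b ⊔ d`. -/
theorem exists_ne_bot_isCompl_sup_of_lt {a b c S : α} (hba : b < a) (hb : IsCompl b c)
    (hS : IsCompl S a) : ∃ d, d ≠ ⊥ ∧ Disjoint d S ∧ IsCompl (d ⊔ S) b := by
  have hsplit : b ⊔ c ⊓ a = a := by
    rw [← sup_inf_assoc_of_le c hba.le, hb.sup_eq_top, top_inf_eq]
  have hdisj : Disjoint b (c ⊓ a) := hb.disjoint.mono_right inf_le_left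
  refine ⟨c ⊓ a, fun hd => ?_, hS.disjoint.symm.mono_left inf_le_right, ?_⟩
  · rw [hd, sup_bot_eq] at hsplit
    exact hba.ne hsplit
  · refine (hdisj.isCompl_sup_right_of_isCompl_sup_left ?_).symm
    rw [hsplit]
    exact hS.symm

theorem exists_sSupIndep_isCompl_of_strictAnti {k : ℕ} (a : Fin (k + 1) → α)
    (ha : ∀ i, ∃ c, IsCompl (a i) c) (hanti : StrictAnti a) :
    ∃ s : Set α, sSupIndep s ∧ ⊥ ∉ s ∧ s.Finite ∧ k ≤ s.ncard ∧
      IsCompl (sSup s) (a (Fin.last k)) := by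
  induction k with
  | zero =>
    obtain ⟨c, hc⟩ := ha 0
    refine ⟨{c} \ {⊥}, (sSupIndep_singleton c).mono sdiff_subset, fun h => h.2 rfl,
      (finite_singleton c).sdiff, Nat.zero_le _, ?_⟩
    rw [sSup_sdiff_singleton_bot, sSup_singleton]
    exact hc.symm
  | succ k ih =>
    obtain ⟨s, hind, hbot, hfin, hcard, hS⟩ :=
      ih (a ∘ Fin.castSucc) (fun i => ha _) (hanti.comp_strictMono Fin.strictMono_castSucc)
    obtain ⟨c, hc⟩ := ha (Fin.last (k + 1))
    obtain ⟨d, hd, hdS, hdc⟩ := exists_ne_bot_isCompl_sup_of_lt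
      (hanti (Fin.castSucc_lt_last (Fin.last k))) hc hS
    have hds : d ∉ s := fun h => hd (hdS.eq_bot_of_le (le_sSup h))
    refine ⟨insert d s, hind.insert_of_disjoint hdS, ?_, hfin.insert d, ?_, by rwa [sSup_insert]⟩
    · rintro (h | h)
      exacts [hd h.symm, hbot h]
    · rw [ncard_insert_of_notMem hds hfin]
      omega

theorem exists_sSupIndep_sSup_eq_top_of_strictAnti {k : ℕ} (a : Fin (k + 1) → α)
    (ha : ∀ i, ∃ c, IsCompl (a i) c) (hanti : StrictAnti a) :
    ∃ s : Set α, sSupIndep s ∧ sSup s = ⊤ ∧ ⊥ ∉ s ∧ s.Finite ∧ k ≤ s.ncard := by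
  obtain ⟨s, hind, hbot, hfin, hcard, hS⟩ := exists_sSupIndep_isCompl_of_strictAnti a ha hanti
  refine ⟨insert (a (Fin.last k)) s \ {⊥},
    (hind.insert_of_disjoint hS.disjoint.symm).mono sdiff_subset, ?_, fun h => h.2 rfl,
    (hfin.insert _).sdiff, ?_⟩
  · rw [sSup_sdiff_singleton_bot, sSup_insert, sup_comm, hS.sup_eq_top]
  · refine hcard.trans (ncard_le_ncard (fun x hx => ⟨mem_insert_of_mem _ hx, ?_⟩)
      ((hfin.insert _).sdiff))
    rintro rfl
    exact hbot hx

end Lattice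

/-- A module `M` has finite Krull-Schmidt length (a finite bound on the cardinality of its
direct sum decompositions into nonzero summands) iff there exists `n ≥ 1` such that every
strictly descending chain of direct summands of `M` has length at most `n`. -/
theorem finite_KS_length_iff_bounded_descending_chains {R : Type*} [Ring R] {M : Type*}
    [AddCommGroup M] [Module R M] :
    (∃ n : ℕ, ∀ s : Set (Submodule R M), IsDecomp s → s.Finite ∧ s.ncard ≤ n) ↔
    (∃ n : ℕ, 1 ≤ n ∧ ¬ ∃ f : Fin (n + 1) → Submodule R M,
      (∀ i, IsSummand (f i)) ∧ StrictAnti f) := by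
  constructor
  · rintro ⟨n, hn⟩
    refine ⟨n + 1, n.succ_pos, fun ⟨f, hf, hanti⟩ => ?_⟩
    obtain ⟨s, hind, htop, hbot, -, hcard⟩ :=
      exists_sSupIndep_sSup_eq_top_of_strictAnti f hf hanti
    have := (hn s ⟨hind, htop, hbot⟩).2
    omega
  · rintro ⟨m, -, hm⟩
    refine ⟨m, fun s ⟨hind, htop, hbot⟩ => by_contra fun hs => hm ?_⟩
    obtain ⟨e⟩ := nonempty_fin_embedding_of_not_finite_ncard_le hs
    exact hind.exists_strictAnti_of_embedding htop hbot e
end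

section
/- A module M has finite Krull-Schmidt length if and only if there exists a strictly increasing function from the poset of direct summands of M (ordered by inclusion) to the natural numbers. -/
section Helpers

open Classical

variable {α : Type*} [CompleteLattice α] [IsModularLattice α]

/-- Adding an element disjoint from the sup of an independent family keeps independence. -/
lemma sSupIndep_insert_of_disjoint {s : Set α} {D : α}
    (hs : sSupIndep s) (hD : Disjoint (sSup s) D) : sSupIndep (insert D s) := by
  intro a ha
  rcases eq_or_ne a D with rfl | hne
  · refine hD.symm.mono_right (sSup_le ?_)
    rintro x ⟨hx1, hx2⟩
    rcases hx1 with rfl | hx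
    · exact absurd rfl hx2
    · exact le_sSup hx
  · rcases ha with rfl | ha
    · exact absurd rfl hne
    have h1 : Disjoint a (sSup (s \ {a})) := hs ha
    have h2 : Disjoint (a ⊔ sSup (s \ {a})) D :=
      hD.mono_left (sup_le (le_sSup ha) (sSup_le_sSup Set.diff_subset))
    have h3 := h1.disjoint_sup_right_of_disjoint_sup_left h2
    refine h3.mono_right (sSup_le ?_)
    rintro x ⟨hx1, hx2⟩
    rcases hx1 with rfl | hx
    · exact le_sup_right
    · exact le_trans (le_sSup (⟨hx, hx2⟩ : x ∈ s \ {a})) le_sup_left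

/-- In a modular complete lattice, the sup of a finite subfamily of an independent family is
disjoint from the sup of the rest. -/
lemma disjoint_sSup_finset_of_sSupIndep [DecidableEq α] {s : Set α} (hs : sSupIndep s)
    (t : Finset α) (hts : ↑t ⊆ s) :
    Disjoint (sSup (↑t : Set α)) (sSup (s \ ↑t)) := by
  induction t using Finset.induction_on with
  | empty => simp
  | @insert a t hat ih =>
    have hts' : ↑t ⊆ s := fun x hx => hts (by simp [hx])
    have has : a ∈ s := hts (by simp)
    have ih' := ih hts'
    set b := sSup (↑t : Set α)
    set c := sSup (s \ ↑(insert a t))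
    have haind : Disjoint a (sSup (s \ {a})) := hs has
    have habc : Disjoint a (b ⊔ c) := by
      refine haind.mono_right (sup_le (sSup_le_sSup ?_) (sSup_le_sSup ?_))
      · intro x hx
        exact ⟨hts' hx, by rintro rfl; exact hat hx⟩
      · intro x hx
        exact ⟨hx.1, fun h => hx.2 (by simp_all)⟩
    have hbc : Disjoint b c := by
      refine ih'.mono_right (sSup_le_sSup ?_)
      intro x hx
      exact ⟨hx.1, fun h => hx.2 (by simp_all)⟩
    have := hbc.disjoint_sup_left_of_disjoint_sup_right habc
    simpa [b, c, Finset.coe_insert, sSup_insert] using this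

end Helpers

/-- A module `M` has finite Krull-Schmidt length iff there is a strictly increasing
function from the poset of direct summands of `M` (ordered by inclusion) to `ℕ`. -/
theorem finite_KS_length_iff_strictMono_to_nat {R : Type*} [Ring R] {M : Type*}
    [AddCommGroup M] [Module R M] :
    (∃ n : ℕ, ∀ s : Set (Submodule R M), IsDecomp s → s.Finite ∧ s.ncard ≤ n) ↔
    (∃ η : {N : Submodule R M // IsSummand N} → ℕ, StrictMono η) := by
  classical
  constructor
  · rintro ⟨n, hn⟩
    -- η N = max number of pieces in a decomposition of N
    set S : {N : Submodule R M // IsSummand N} → Set ℕ :=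
      fun N => {k | ∃ t : Finset (Submodule R M),
        sSupIndep (↑t : Set (Submodule R M)) ∧ sSup (↑t : Set (Submodule R M)) = N.1 ∧
        (⊥ : Submodule R M) ∉ t ∧ t.card = k} with hS
    have hne : ∀ N, (S N).Nonempty := by
      intro N
      rcases eq_or_ne N.1 ⊥ with hNb | hNb
      · exact ⟨0, ∅, by simp [hNb.symm]⟩
      · exact ⟨1, {N.1}, by simp [sSupIndep_singleton, Ne.symm hNb]⟩
    have hbdd : ∀ N, ∀ k ∈ S N, k ≤ n := by
      rintro N k ⟨t, ht1, ht2, ht3, rfl⟩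
      obtain ⟨C, hC⟩ := N.2
      rcases eq_or_ne C ⊥ with rfl | hCb
      · -- N = ⊤, t is itself a decomposition
        have hNtop : N.1 = ⊤ := by
          have := hC.sup_eq_top
          simpa using this
        have hdec : IsDecomp (↑t : Set (Submodule R M)) :=
          ⟨ht1, by rw [ht2, hNtop], by simpa using ht3⟩
        have := (hn _ hdec).2
        rwa [Set.ncard_coe_finset] at this
      · -- add the complement C as an extra piece
        have hdisj : Disjoint (sSup (↑t : Set (Submodule R M))) C := by
          rw [ht2]; exact hC.disjoint
        have hind : sSupIndep (insert C (↑t : Set (Submodule R M))) :=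
          sSupIndep_insert_of_disjoint ht1 hdisj
        have hsup : sSup (insert C (↑t : Set (Submodule R M))) = ⊤ := by
          rw [sSup_insert, ht2, sup_comm]
          exact hC.sup_eq_top
        have hbot : (⊥ : Submodule R M) ∉ insert C (↑t : Set (Submodule R M)) := by
          rintro (h | h)
          · exact hCb (by simpa using h.symm)
          · exact ht3 (by simpa using h)
        have hdec : IsDecomp (insert C (↑t : Set (Submodule R M))) := ⟨hind, hsup, hbot⟩
        have h2 := (hn _ hdec).2
        have hcoe : (insert C (↑t : Set (Submodule R M))) = ↑(insert C t) := by simp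
        rw [hcoe, Set.ncard_coe_finset] at h2
        calc t.card ≤ (insert C t).card := Finset.card_le_card (Finset.subset_insert _ _)
          _ ≤ n := h2
    refine ⟨fun N => sSup (S N), ?_⟩
    intro N N' hlt
    have hNle : N.1 < N'.1 := hlt
    -- attained maximum for N
    obtain ⟨t, ht1, ht2, ht3, ht4⟩ :
        sSup (S N) ∈ S N := Nat.sSup_mem (hne N) ⟨n, fun k hk => hbdd N k hk⟩
    obtain ⟨C, hC⟩ := N.2
    set D : Submodule R M := N'.1 ⊓ C with hD
    have hsupD : N.1 ⊔ D = N'.1 := by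
      rw [hD, sup_comm, inf_sup_assoc_of_le _ hNle.le, sup_comm C N.1, hC.sup_eq_top, inf_top_eq]
    have hDbot : D ≠ ⊥ := by
      intro h
      rw [h, sup_bot_eq] at hsupD
      exact hNle.ne hsupD
    have hDdisj : Disjoint (sSup (↑t : Set (Submodule R M))) D := by
      rw [ht2]
      exact hC.disjoint.mono_right inf_le_right
    have hDt : D ∉ t := by
      intro h
      have : D ≤ sSup (↑t : Set (Submodule R M)) := le_sSup (by simpa using h)
      exact hDbot (le_bot_iff.mp (hDdisj this le_rfl))
    have hmem : sSup (S N) + 1 ∈ S N' := by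
      refine ⟨insert D t, ?_, ?_, ?_, ?_⟩
      · have := sSupIndep_insert_of_disjoint ht1 hDdisj
        simpa using this
      · rw [Finset.coe_insert, sSup_insert, sup_comm, ht2, hsupD]
      · intro h
        rcases Finset.mem_insert.mp h with h | h
        · exact hDbot h.symm
        · exact ht3 h
      · rw [Finset.card_insert_of_notMem hDt, ht4]
    calc sSup (S N) < sSup (S N) + 1 := Nat.lt_succ_self _
      _ ≤ sSup (S N') := le_csSup ⟨n, fun k hk => hbdd N' k hk⟩ hmem
  · rintro ⟨η, hη⟩
    set bot' : {N : Submodule R M // IsSummand N} := ⟨⊥, ⊤, isCompl_bot_top⟩ with hbot'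
    set top' : {N : Submodule R M // IsSummand N} := ⟨⊤, ⊥, isCompl_top_bot⟩ with htop'
    have hmono : ∀ A B : {N : Submodule R M // IsSummand N}, A ≤ B → η A ≤ η B := by
      intro A B hAB
      rcases eq_or_lt_of_le hAB with h | h
      · rw [h]
      · exact (hη h).le
    -- key counting lemma
    have key : ∀ s : Set (Submodule R M), IsDecomp s →
        ∀ t : Finset (Submodule R M), ↑t ⊆ s →
        ∀ h : IsSummand (sSup (↑t : Set (Submodule R M))),
        η bot' + t.card ≤ η ⟨sSup (↑t : Set (Submodule R M)), h⟩ := by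
      rintro s ⟨hs1, hs2, hs3⟩ t
      induction t using Finset.induction_on with
      | empty =>
        intro _ h
        have : (⟨sSup (↑(∅ : Finset (Submodule R M)) : Set (Submodule R M)), h⟩ :
            {N : Submodule R M // IsSummand N}) = bot' := Subtype.ext (by simp [hbot'])
        rw [this]
        simp
      | @insert a t hat ih =>
        intro hts h
        have hts' : ↑t ⊆ s := fun x hx => hts (by simp [hx])
        have has : a ∈ s := hts (by simp)
        -- sSup ↑t is a summand, with complement sSup (s \ ↑t)
        have hsumt : IsSummand (sSup (↑t : Set (Submodule R M))) := by
          refine ⟨sSup (s \ ↑t), disjoint_sSup_finset_of_sSupIndep hs1 t hts', ?_⟩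
          rw [codisjoint_iff, ← sSup_union, Set.union_diff_cancel hts', hs2]
        have hiha := ih hts' hsumt
        -- strict increase
        have hdisj : Disjoint a (sSup (↑t : Set (Submodule R M))) := by
          refine (hs1 has).mono_right (sSup_le_sSup ?_)
          intro x hx
          exact ⟨hts' hx, by rintro rfl; exact hat hx⟩
        have habot : a ≠ ⊥ := by rintro rfl; exact hs3 has
        have hlt : sSup (↑t : Set (Submodule R M)) < sSup (↑(insert a t) : Set (Submodule R M)) := by
          rw [Finset.coe_insert, sSup_insert]
          refine right_lt_sup.mpr ?_
          intro hle
          exact habot (le_bot_iff.mp (hdisj.le_bot.trans' (le_inf le_rfl hle)))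
        have hstep : η ⟨sSup (↑t : Set (Submodule R M)), hsumt⟩ <
            η ⟨sSup (↑(insert a t) : Set (Submodule R M)), h⟩ := hη (Subtype.mk_lt_mk.mpr hlt)
        rw [Finset.card_insert_of_notMem hat]
        omega
    refine ⟨η top', fun s hs => ?_⟩
    -- finiteness
    have hfin : s.Finite := by
      by_contra hinf
      obtain ⟨t, hts, htc⟩ := Set.Infinite.exists_subset_card_eq hinf (η top' + 1)
      have hsumt : IsSummand (sSup (↑t : Set (Submodule R M))) := by
        refine ⟨sSup (s \ ↑t), disjoint_sSup_finset_of_sSupIndep hs.1 t hts, ?_⟩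
        rw [codisjoint_iff, ← sSup_union, Set.union_diff_cancel hts, hs.2.1]
      have h1 := key s hs t hts hsumt
      have h2 : η ⟨sSup (↑t : Set (Submodule R M)), hsumt⟩ ≤ η top' :=
        hmono _ _ (Subtype.mk_le_mk.mpr le_top)
      omega
    refine ⟨hfin, ?_⟩
    have hcoe : (↑hfin.toFinset : Set (Submodule R M)) = s := hfin.coe_toFinset
    have hsumtop : IsSummand (sSup (↑hfin.toFinset : Set (Submodule R M))) := by
      rw [hcoe, hs.2.1]
      exact ⟨⊥, isCompl_top_bot⟩
    have h1 := key s hs hfin.toFinset (by rw [hcoe]) hsumtop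
    have h2 : (⟨sSup (↑hfin.toFinset : Set (Submodule R M)), hsumtop⟩ :
        {N : Submodule R M // IsSummand N}) = top' :=
      Subtype.ext (show sSup (↑hfin.toFinset : Set (Submodule R M)) = (⊤ : Submodule R M) by
        rw [hcoe]; exact hs.2.1)
    rw [h2] at h1
    have h3 : s.ncard = hfin.toFinset.card := by
      rw [← Set.ncard_coe_finset, hcoe]
    omega
end

section
/- Let M be a module with finite Krull-Schmidt length, and let N be a direct summand of M. If all direct sum decompositions of M into indecomposable summands have the same cardinality, then all direct sum decompositions of N into indecomposable summands have the same cardinality. -/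
/-- `s` is a direct sum decomposition of the submodule `N` into nonzero summands. -/
def IsDecompOf {R : Type*} [Ring R] {M : Type*} [AddCommGroup M] [Module R M]
    (N : Submodule R M) (s : Set (Submodule R M)) : Prop :=
  sSupIndep s ∧ sSup s = N ∧ ⊥ ∉ s

/-- `s` is a finite direct sum decomposition of `N` into indecomposable submodules. -/
def IsIndecompDecompOf {R : Type*} [Ring R] {M : Type*} [AddCommGroup M] [Module R M]
    (N : Submodule R M) (s : Set (Submodule R M)) : Prop :=
  IsDecompOf N s ∧ s.Finite ∧ ∀ A ∈ s, IsIndecomp A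

/-!
Pick a complement `N'` of `N`. Among the decompositions of `N'` into nonzero summands, one of
maximal cardinality exists because the Krull-Schmidt length of `M` bounds them all, and it is
indecomposable since splitting a summand would enlarge it. Adjoining it to two indecomposable
decompositions `s`, `t` of `N` gives indecomposable decompositions of `M`, whence
`s.ncard + k = t.ncard + k`.
-/

theorem sSupIndep.union_of_disjoint {α : Type*} [CompleteLattice α] [IsModularLattice α]
    {s t : Set α} (hs : sSupIndep s) (ht : sSupIndep t) (hst : Disjoint (sSup s) (sSup t)) :
    sSupIndep (s ∪ t) := by
  suffices key : ∀ {s t : Set α}, sSupIndep s → Disjoint (sSup s) (sSup t) →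
      ∀ a ∈ s, Disjoint a (sSup ((s ∪ t) \ {a})) by
    rintro a (ha | ha)
    · exact key hs hst a ha
    · simpa only [Set.union_comm] using key ht hst.symm a ha
  intro s t hs hst a ha
  have hle : sSup ((s ∪ t) \ {a}) ≤ sSup (s \ {a}) ⊔ sSup t := by
    rw [← sSup_union]
    exact sSup_le_sSup fun x ⟨hx, hxa⟩ => hx.imp (⟨·, hxa⟩) id
  have hsplit : Disjoint (a ⊔ sSup (s \ {a})) (sSup t) :=
    hst.mono_left (sup_le (le_sSup ha) (sSup_le_sSup Set.sdiff_subset))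
  exact ((hs ha).disjoint_sup_right_of_disjoint_sup_left hsplit).mono_right hle

section Decompositions

variable {R : Type*} [Ring R] {M : Type*} [AddCommGroup M] [Module R M]

theorem exists_isDecompOf (N : Submodule R M) : ∃ s, IsDecompOf N s := by
  by_cases h : N = ⊥
  · exact ⟨∅, sSupIndep_empty, by simp [h], by simp⟩
  · exact ⟨{N}, sSupIndep_singleton N, sSup_singleton, by simpa using Ne.symm h⟩

theorem isDecompOf_pair {B C : Submodule R M} (hBC : B ⊓ C = ⊥) (hB : B ≠ ⊥) (hC : C ≠ ⊥) :
    IsDecompOf (B ⊔ C) {B, C} := by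
  have hne : B ≠ C := fun h => hB (by simpa [h] using hBC)
  refine ⟨(sSupIndep_pair hne).mpr (disjoint_iff.mpr hBC), sSup_pair, ?_⟩
  rintro (h | h)
  exacts [hB h.symm, hC h.symm]

theorem IsDecompOf.diff_singleton {N : Submodule R M} {s : Set (Submodule R M)}
    (hs : IsDecompOf N s) (A : Submodule R M) : IsDecompOf (sSup (s \ {A})) (s \ {A}) :=
  ⟨hs.1.mono Set.sdiff_subset, rfl, fun h => hs.2.2 h.1⟩

theorem IsDecompOf.sup {N N' : Submodule R M} {s t : Set (Submodule R M)}
    (hs : IsDecompOf N s) (ht : IsDecompOf N' t) (h : Disjoint N N') :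
    IsDecompOf (N ⊔ N') (s ∪ t) := by
  refine ⟨hs.1.union_of_disjoint ht.1 (hs.2.1 ▸ ht.2.1 ▸ h), by rw [sSup_union, hs.2.1, ht.2.1],
    ?_⟩
  rintro (h' | h')
  exacts [hs.2.2 h', ht.2.2 h']

theorem IsDecompOf.disjoint {N N' : Submodule R M} {s t : Set (Submodule R M)}
    (hs : IsDecompOf N s) (ht : IsDecompOf N' t) (h : Disjoint N N') : Disjoint s t := by
  refine Set.disjoint_left.mpr fun x hxs hxt => hs.2.2 ?_
  have hx : x ≤ N ⊓ N' := le_inf (hs.2.1 ▸ le_sSup hxs) (ht.2.1 ▸ le_sSup hxt)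
  rw [h.eq_bot, le_bot_iff] at hx
  rwa [hx] at hxs

theorem IsDecompOf.ncard_union {N N' : Submodule R M} {s t : Set (Submodule R M)}
    (hs : IsDecompOf N s) (ht : IsDecompOf N' t) (h : Disjoint N N') (hsf : s.Finite)
    (htf : t.Finite) : (s ∪ t).ncard = s.ncard + t.ncard :=
  Set.ncard_union_eq (hs.disjoint ht h) hsf htf

theorem IsDecompOf.exists_ncard_eq_succ_of_sup_eq {N : Submodule R M} {s : Set (Submodule R M)}
    (hs : IsDecompOf N s) (hsf : s.Finite) {A B C : Submodule R M} (hA : A ∈ s)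
    (hsup : B ⊔ C = A) (hinf : B ⊓ C = ⊥) (hB : B ≠ ⊥) (hC : C ≠ ⊥) :
    ∃ s', IsDecompOf N s' ∧ s'.ncard = s.ncard + 1 := by
  have hpair := isDecompOf_pair hinf hB hC
  have hrest := hs.diff_singleton A
  have hdisj : Disjoint (B ⊔ C) (sSup (s \ {A})) := hsup.symm ▸ hs.1 hA
  have hN : B ⊔ C ⊔ sSup (s \ {A}) = N := by
    rw [hsup, ← sSup_insert, Set.insert_sdiff_singleton, Set.insert_eq_of_mem hA, hs.2.1]
  refine ⟨_, hN ▸ hpair.sup hrest hdisj, ?_⟩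
  have hne : B ≠ C := fun h => hB (by simpa [h] using hinf)
  rw [hpair.ncard_union hrest hdisj (Set.toFinite _) hsf.sdiff, Set.ncard_pair hne,
    Set.ncard_sdiff_singleton_of_mem hA]
  have : 0 < s.ncard := (Set.ncard_pos hsf).mpr ⟨A, hA⟩
  omega

theorem exists_isIndecompDecompOf_of_ncard_le {N : Submodule R M} {n : ℕ}
    (hn : ∀ s, IsDecompOf N s → s.Finite ∧ s.ncard ≤ n) : ∃ s, IsIndecompDecompOf N s := by
  set P : Set ℕ := {k | ∃ s, IsDecompOf N s ∧ s.ncard = k}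
  have hPne : P.Nonempty := let ⟨s, hs⟩ := exists_isDecompOf N; ⟨_, s, hs, rfl⟩
  have hPbdd : BddAbove P := ⟨n, by rintro k ⟨s, hs, rfl⟩; exact (hn s hs).2⟩
  obtain ⟨s, hs, hsmax⟩ := Nat.sSup_mem hPne hPbdd
  refine ⟨s, hs, (hn s hs).1, fun A hA => ⟨fun h => hs.2.2 (h ▸ hA), fun B C hsup hinf => ?_⟩⟩
  by_contra! hne
  obtain ⟨s', hs', hcard⟩ :=
    hs.exists_ncard_eq_succ_of_sup_eq (hn s hs).1 hA hsup hinf hne.1 hne.2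
  have := le_csSup hPbdd ⟨s', hs', rfl⟩
  omega

theorem IsDecompOf.finite_and_ncard_le_of_isCompl {N N' : Submodule R M}
    {s : Set (Submodule R M)} (hs : IsDecompOf N s) (h : IsCompl N N') {n : ℕ}
    (hn : ∀ s : Set (Submodule R M), IsDecompOf ⊤ s → s.Finite ∧ s.ncard ≤ n) :
    s.Finite ∧ s.ncard ≤ n := by
  obtain ⟨t, ht⟩ := exists_isDecompOf N'
  have hst := hs.sup ht h.disjoint
  rw [h.sup_eq_top] at hst
  obtain ⟨hfin, hcard⟩ := hn _ hst
  exact ⟨hfin.subset Set.subset_union_left,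
    (Set.ncard_le_ncard Set.subset_union_left hfin).trans hcard⟩

theorem IsIndecompDecompOf.sup {N N' : Submodule R M} {s t : Set (Submodule R M)}
    (hs : IsIndecompDecompOf N s) (ht : IsIndecompDecompOf N' t) (h : Disjoint N N') :
    IsIndecompDecompOf (N ⊔ N') (s ∪ t) :=
  ⟨hs.1.sup ht.1 h, hs.2.1.union ht.2.1, fun A hA => hA.elim (hs.2.2 A) (ht.2.2 A)⟩

end Decompositions

/-- Let `M` have finite Krull-Schmidt length and let `N` be a direct summand of `M`. If all
indecomposable direct sum decompositions of `M` have the same cardinality, then all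
indecomposable direct sum decompositions of `N` have the same cardinality. -/
theorem indecomp_decomp_card_eq_of_summand {R : Type*} [Ring R] {M : Type*}
    [AddCommGroup M] [Module R M]
    (hKS : ∃ n : ℕ, ∀ s : Set (Submodule R M), IsDecompOf ⊤ s → s.Finite ∧ s.ncard ≤ n)
    (hM : ∀ s t : Set (Submodule R M), IsIndecompDecompOf (⊤ : Submodule R M) s →
      IsIndecompDecompOf (⊤ : Submodule R M) t → s.ncard = t.ncard)
    (N : Submodule R M) (hN : IsSummand N) :
    ∀ s t : Set (Submodule R M), IsIndecompDecompOf N s → IsIndecompDecompOf N t →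
      s.ncard = t.ncard := by
  intro s t hs ht
  obtain ⟨n, hn⟩ := hKS
  obtain ⟨N', hc⟩ := hN
  obtain ⟨u, hu⟩ := exists_isIndecompDecompOf_of_ncard_le fun v hv =>
    hv.finite_and_ncard_le_of_isCompl hc.symm hn
  have hsu := hs.sup hu hc.disjoint
  have htu := ht.sup hu hc.disjoint
  rw [hc.sup_eq_top] at hsu htu
  have hcard := hM _ _ hsu htu
  rw [hs.1.ncard_union hu.1 hc.disjoint hs.2.1 hu.2.1,
    ht.1.ncard_union hu.1 hc.disjoint ht.2.1 hu.2.1] at hcard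
  omega
end

section
/- Suppose M satisfies the descending chain condition on direct summands. If M has only finitely many direct summands up to isomorphism, then M has only finitely many direct sum decompositions up to decomposition-isomorphism. -/
/-- Two decompositions are decomposition-isomorphic: there is a bijection matching
isomorphic summands. -/
def DecompIso {R : Type*} [Ring R] {M : Type*} [AddCommGroup M] [Module R M]
    (s t : Set (Submodule R M)) : Prop :=
  ∃ φ : s ≃ t, ∀ A : s, Nonempty ((A : Submodule R M) ≃ₗ[R] (φ A : Submodule R M))

section

open Set

lemma sSupIndep.disjoint_sSup_sSup {α : Type*} [CompleteLattice α] [IsModularLattice α]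
    [IsCompactlyGenerated α] {s A B : Set α} (hs : sSupIndep s) (hA : A ⊆ s) (hB : B ⊆ s)
    (hAB : Disjoint A B) : Disjoint (sSup A) (sSup B) := by
  have h := ((sSupIndep_iff s).mp hs).disjoint_biSup_biSup
    (s := (↑) ⁻¹' A) (t := (↑) ⁻¹' B) (hAB.preimage _)
  rwa [← sSup_image, ← sSup_image, Subtype.image_preimage_coe, Subtype.image_preimage_coe,
    inter_eq_right.mpr hA, inter_eq_right.mpr hB] at h

variable {R : Type*} [Ring R] {M : Type*} [AddCommGroup M] [Module R M]

lemma isSummand_bot : IsSummand (⊥ : Submodule R M) :=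
  ⟨⊤, isCompl_bot_top⟩

lemma IsSummand.map_subtype {N : Submodule R M} (hN : IsSummand N) {a b : Submodule R N}
    (hab : IsCompl a b) : IsSummand (a.map N.subtype) := by
  obtain ⟨N', hNN'⟩ := hN
  refine ⟨b.map N.subtype ⊔ N', (Submodule.disjoint_map N.injective_subtype hab.disjoint)
    |>.isCompl_sup_right_of_isCompl_sup_left ?_⟩
  rwa [← Submodule.map_sup, hab.sup_eq_top, Submodule.map_subtype_top]

lemma isCompl_comap_subtype_of_disjoint_of_sup_eq {A B N : Submodule R M} (hAB : Disjoint A B)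
    (hN : A ⊔ B = N) : IsCompl (A.comap N.subtype) (B.comap N.subtype) := by
  subst hN
  rw [(A ⊔ B).mapIic.isCompl_iff, Set.Iic.isCompl_iff]
  simpa only [Submodule.coe_mapIic_apply, Submodule.map_comap_subtype,
    inf_of_le_right (le_sup_left : A ≤ A ⊔ B), inf_of_le_right (le_sup_right : B ≤ A ⊔ B)]
    using ⟨hAB, trivial⟩

namespace IsDecomp

variable {s : Set (Submodule R M)}

lemma isSummand_sSup (hs : IsDecomp s) {A : Set (Submodule R M)} (hA : A ⊆ s) :
    IsSummand (sSup A) :=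
  ⟨sSup (s \ A), hs.1.disjoint_sSup_sSup hA sdiff_subset disjoint_sdiff_right, by
    rw [codisjoint_iff, ← sSup_union, union_sdiff_cancel hA, hs.2.1]⟩

lemma isSummand_of_mem (hs : IsDecomp s) {N : Submodule R M} (hN : N ∈ s) : IsSummand N := by
  simpa using hs.isSummand_sSup (singleton_subset_iff.mpr hN)

end IsDecomp

def SummandDCC (R M : Type*) [Ring R] [AddCommGroup M] [Module R M] : Prop :=
  ¬ ∃ f : ℕ → Submodule R M, (∀ n, IsSummand (f n)) ∧ ∀ n, f (n + 1) < f n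

namespace SummandDCC

lemma exists_minimal (hM : SummandDCC R M) {S : Set (Submodule R M)}
    (hS : ∀ N ∈ S, IsSummand N) (hne : S.Nonempty) : ∃ N ∈ S, ∀ N' ∈ S, ¬ N' < N := by
  by_contra! hdesc
  choose next hnext hlt using hdesc
  let f : ℕ → S := fun n =>
    Nat.rec ⟨hne.some, hne.some_mem⟩ (fun _ N => ⟨next N N.2, hnext N N.2⟩) n
  exact hM ⟨fun n => (f n).1, fun n => hS _ (f n).2, fun n => hlt _ (f n).2⟩

lemma finite_of_isDecomp (hM : SummandDCC R M) {s : Set (Submodule R M)} (hs : IsDecomp s) :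
    s.Finite := by
  by_contra hinf
  obtain ⟨_, ⟨A, hA, rfl⟩, hmin⟩ := hM.exists_minimal
    (S := {N | ∃ A : Set (Submodule R M), A.Finite ∧ N = sSup (s \ A)})
    (fun _ ⟨A, _, hN⟩ => hN ▸ hs.isSummand_sSup sdiff_subset) ⟨_, ∅, finite_empty, rfl⟩
  obtain ⟨x, hxs, hxA⟩ := (Set.Infinite.sdiff hinf hA).nonempty
  refine hmin _ ⟨insert x A, hA.insert x, rfl⟩ (lt_of_le_of_ne ?_ fun heq => ?_)
  · exact sSup_le_sSup (sdiff_subset_sdiff_right (subset_insert x A))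
  · have hdisj : Disjoint x (sSup (s \ insert x A)) :=
      hs.1.disjoint_sSup hxs sdiff_subset fun h => h.2 (mem_insert x A)
    have hle : x ≤ sSup (s \ insert x A) := heq ▸ le_sSup ⟨hxs, hxA⟩
    exact hs.2.2 (hdisj.eq_bot_of_le hle ▸ hxs)

lemma isEmpty_linearEquiv_of_isCompl (hM : SummandDCC R M) {N : Submodule R M}
    (hN : IsSummand N) {a b : Submodule R N} (hab : IsCompl a b) (ha : a ≠ ⊤) :
    IsEmpty (a ≃ₗ[R] N) := by
  refine ⟨fun e => ?_⟩
  obtain ⟨Q, ⟨hQ, ⟨f⟩⟩, hmin⟩ := hM.exists_minimal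
    (S := {Q | IsSummand Q ∧ Nonempty (N ≃ₗ[R] Q)}) (fun _ h => h.1)
    ⟨N, hN, ⟨LinearEquiv.refl R N⟩⟩
  set a' := a.map (f : N →ₗ[R] Q)
  have hab' : IsCompl a' (b.map (f : N →ₗ[R] Q)) :=
    (Submodule.orderIsoMapComap f).isCompl_iff.mp hab
  have ha' : a' ≠ ⊤ := by
    rw [Ne, ← (Submodule.orderIsoMapComap f).map_top]
    exact (Submodule.orderIsoMapComap f).injective.ne ha
  refine hmin (a'.map Q.subtype) ⟨hQ.map_subtype hab', ⟨?_⟩⟩ ?_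
  · exact e.symm.trans ((f.submoduleMap a).trans
      (Submodule.equivMapOfInjective _ Q.injective_subtype _))
  · simpa using Submodule.map_strictMono_of_injective Q.injective_subtype ha'.lt_top

lemma isEmpty_linearEquiv_sSup_of_ssubset (hM : SummandDCC R M) {s : Set (Submodule R M)}
    (hs : IsDecomp s) {A B : Set (Submodule R M)} (hBs : B ⊆ s) (hAB : A ⊂ B) :
    IsEmpty (↥(sSup A) ≃ₗ[R] ↥(sSup B)) := by
  have hsup : sSup A ⊔ sSup (B \ A) = sSup B := by
    rw [← sSup_union, union_sdiff_cancel hAB.subset]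
  have hdisj : Disjoint (sSup A) (sSup (B \ A)) :=
    hs.1.disjoint_sSup_sSup (hAB.subset.trans hBs) (sdiff_subset.trans hBs) disjoint_sdiff_right
  have hnle : ¬ sSup B ≤ sSup A := by
    obtain ⟨x, hxB, hxA⟩ := exists_of_ssubset hAB
    refine fun hle => hs.2.2 ?_
    have hx : x ≤ sSup A ⊓ sSup (B \ A) := le_inf (hle.trans' (le_sSup hxB)) (le_sSup ⟨hxB, hxA⟩)
    rw [hdisj.eq_bot, le_bot_iff] at hx
    exact hx ▸ hBs hxB
  refine ⟨fun e => (hM.isEmpty_linearEquiv_of_isCompl (hs.isSummand_sSup hBs)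
    (isCompl_comap_subtype_of_disjoint_of_sup_eq hdisj hsup) ?_).false
    ((Submodule.comapSubtypeEquivOfLe (hsup ▸ le_sup_left)).trans e)⟩
  rwa [Ne, Submodule.comap_subtype_eq_top]

lemma card_lt_of_isDecomp (hM : SummandDCC R M) {s : Set (Submodule R M)} (hs : IsDecomp s)
    {ι : Type*} [Finite ι] (κ : Submodule R M → ι)
    (hκ : ∀ N N', IsSummand N → IsSummand N' → κ N = κ N' → Nonempty (N ≃ₗ[R] N')) :
    Nat.card s < Nat.card ι := by
  have := (hM.finite_of_isDecomp hs).to_subtype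
  let e : Fin (Nat.card s) ≃ s := (Finite.equivFin s).symm
  let init (i : ℕ) : Set (Submodule R M) := (fun l => (e l : Submodule R M)) '' {l | (l : ℕ) < i}
  have hinit : ∀ i, init i ⊆ s := by
    rintro i _ ⟨l, -, rfl⟩
    exact (e l).2
  have hssubset : ∀ i j : Fin (Nat.card s + 1), i < j → init i ⊂ init j := by
    intro i j hij
    have hi : (i : ℕ) < Nat.card s := by omega
    have hsub : init i ⊆ init j := image_mono fun l (hl : (l : ℕ) < i) => hl.trans hij
    refine (ssubset_iff_of_subset hsub).mpr ⟨e ⟨i, hi⟩, ⟨⟨i, hi⟩, hij, rfl⟩, ?_⟩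
    rintro ⟨l, hl, hli⟩
    have : (l : ℕ) = i := congrArg Fin.val (e.injective (Subtype.ext hli))
    exact (lt_irrefl (i : ℕ)) (this ▸ hl)
  have hinj : Function.Injective fun i : Fin (Nat.card s + 1) => κ (sSup (init i)) :=
    .of_lt_imp_ne fun i j hij heq =>
      (hM.isEmpty_linearEquiv_sSup_of_ssubset hs (hinit j) (hssubset i j hij)).false
        (hκ _ _ (hs.isSummand_sSup (hinit i)) (hs.isSummand_sSup (hinit j)) heq).some
  simpa using Nat.card_le_card_of_injective _ hinj

end SummandDCC

lemma decompIso_of_card_fiber_eq {s t : Set (Submodule R M)} (hs : s.Finite) (ht : t.Finite)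
    {ι : Type*} (κ : Submodule R M → ι)
    (hκ : ∀ x ∈ s, ∀ y ∈ t, κ x = κ y → Nonempty (x ≃ₗ[R] y))
    (hcard : ∀ i, Nat.card {x : s // κ x = i} = Nat.card {y : t // κ y = i}) :
    DecompIso s t := by
  have := hs.to_subtype
  have := ht.to_subtype
  let E (i : ι) : {x : s // κ x = i} ≃ {y : t // κ y = i} := (Finite.card_eq.mp (hcard i)).some
  exact ⟨.ofFiberEquiv E, fun x => hκ x x.2 _ (Subtype.prop _) (Equiv.ofFiberEquiv_map E x).symm⟩

lemma exists_isoClassifier {F : Set (Submodule R M)}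
    (hF : ∀ N : Submodule R M, IsSummand N → ∃ T ∈ F, Nonempty (N ≃ₗ[R] T)) :
    ∃ κ : Submodule R M → F,
      ∀ N N', IsSummand N → IsSummand N' → κ N = κ N' → Nonempty (N ≃ₗ[R] N') := by
  have hT : ∀ N : Submodule R M, ∃ T : F, IsSummand N → Nonempty (N ≃ₗ[R] T) := fun N => by
    by_cases hN : IsSummand N
    · obtain ⟨T, hT, e⟩ := hF N hN
      exact ⟨⟨T, hT⟩, fun _ => e⟩
    · obtain ⟨T, hT, -⟩ := hF ⊥ isSummand_bot
      exact ⟨⟨T, hT⟩, fun h => absurd h hN⟩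
  choose κ hκ using hT
  refine ⟨κ, fun N N' hN hN' h => ?_⟩
  obtain ⟨e⟩ := hκ N hN
  obtain ⟨e'⟩ := hκ N' hN'
  exact ⟨e.trans (h ▸ e'.symm)⟩

end

/-- Suppose `M` satisfies the descending chain condition on direct summands. If `M` has
only finitely many direct summands up to isomorphism, then `M` has only finitely many
direct sum decompositions up to decomposition-isomorphism. -/
theorem finitely_many_decomps_of_finitely_many_summands {R : Type*} [Ring R] {M : Type*}
    [AddCommGroup M] [Module R M]
    (hM : ¬ ∃ f : ℕ → Submodule R M, (∀ n, IsSummand (f n)) ∧ ∀ n, f (n + 1) < f n)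
    (hfin : ∃ F : Set (Submodule R M), F.Finite ∧
      ∀ N : Submodule R M, IsSummand N → ∃ T ∈ F, Nonempty (N ≃ₗ[R] T)) :
    ∃ F : Set (Set (Submodule R M)), F.Finite ∧
      ∀ s : Set (Submodule R M), IsDecomp s → ∃ t ∈ F, DecompIso s t := by
  have hM : SummandDCC R M := hM
  obtain ⟨F, hF, hFiso⟩ := hfin
  have := hF.to_subtype
  obtain ⟨κ, hκ⟩ := exists_isoClassifier hFiso
  let σ (s : Set (Submodule R M)) (T : F) : ℕ := Nat.card {x : s // κ x = T}
  have hσ : σ '' {s | IsDecomp s} ⊆ Set.univ.pi fun _ => Set.Iic (Nat.card F) := by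
    rintro _ ⟨s, hs, rfl⟩ T -
    have := (hM.finite_of_isDecomp hs).to_subtype
    exact (Finite.card_subtype_le _).trans (hM.card_lt_of_isDecomp hs κ hκ).le
  obtain ⟨D, hDs, hD, hσD⟩ :=
    ((Set.Finite.pi fun _ => Set.finite_Iic _).subset hσ).exists_subset_finite_image_eq subset_rfl
  refine ⟨D, hD, fun s hs => ?_⟩
  obtain ⟨t, ht, hts⟩ : σ s ∈ σ '' D := hσD ▸ Set.mem_image_of_mem σ hs
  exact ⟨t, ht, decompIso_of_card_fiber_eq (hM.finite_of_isDecomp hs)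
    (hM.finite_of_isDecomp (hDs ht)) κ
    (fun x hx y hy => hκ x y (hs.isSummand_of_mem hx) ((hDs ht).isSummand_of_mem hy))
    (congrFun hts.symm)⟩
end

section
/- Let D be an integral domain and let E be the subring D + D^(ℕ) of D^ℕ consisting of sequences that are eventually constant. Then the poset of idempotents of E does not satisfy the descending chain condition, but it has deviation equal to 1. -/
universe v

/-- The subring `D + D^(ℕ)` of `D^ℕ` of eventually constant sequences. -/
def EvConstSubring (D : Type*) [CommRing D] : Subring (ℕ → D) where
  carrier := {f | ∃ N : ℕ, ∃ c : D, ∀ n ≥ N, f n = c}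
  zero_mem' := ⟨0, 0, fun _ _ => rfl⟩
  one_mem' := ⟨0, 1, fun _ _ => rfl⟩
  add_mem' := by
    rintro f g ⟨N₁, c₁, h₁⟩ ⟨N₂, c₂, h₂⟩
    exact ⟨max N₁ N₂, c₁ + c₂, fun n hn => by
      simp [Pi.add_apply, h₁ n (le_trans (le_max_left _ _) hn),
        h₂ n (le_trans (le_max_right _ _) hn)]⟩
  mul_mem' := by
    rintro f g ⟨N₁, c₁, h₁⟩ ⟨N₂, c₂, h₂⟩
    exact ⟨max N₁ N₂, c₁ * c₂, fun n hn => by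
      simp [Pi.mul_apply, h₁ n (le_trans (le_max_left _ _) hn),
        h₂ n (le_trans (le_max_right _ _) hn)]⟩
  neg_mem' := by
    rintro f ⟨N, c, h⟩
    exact ⟨N, -c, fun n hn => by simp [Pi.neg_apply, h n hn]⟩

/-- The poset of idempotents of a ring, ordered by `e ≤ e'` iff `e * e' = e = e' * e`. -/
def IdemPoset (E : Type*) [Ring E] : Type _ := {e : E // IsIdempotentElem e}

instance (E : Type*) [Ring E] : PartialOrder (IdemPoset E) where
  le e f := e.1 * f.1 = e.1 ∧ f.1 * e.1 = e.1
  le_refl e := ⟨e.2, e.2⟩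
  le_trans e f g h h' := by
    obtain ⟨h1, h2⟩ := h
    obtain ⟨h3, h4⟩ := h'
    constructor
    · calc e.1 * g.1 = (e.1 * f.1) * g.1 := by rw [h1]
        _ = e.1 * (f.1 * g.1) := by rw [mul_assoc]
        _ = e.1 * f.1 := by rw [h3]
        _ = e.1 := h1
    · calc g.1 * e.1 = g.1 * (f.1 * e.1) := by rw [h2]
        _ = (g.1 * f.1) * e.1 := by rw [mul_assoc]
        _ = f.1 * e.1 := by rw [h4]
        _ = e.1 := h2
  le_antisymm e f h h' := by
    obtain ⟨h1, h2⟩ := h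
    obtain ⟨h3, h4⟩ := h'
    exact Subtype.ext (h2.symm.trans h3)

/-!
Since `D` is a domain, an idempotent of `E` is the indicator function of its support, a subset
of `ℕ` that is finite or cofinite, and the order on idempotents is inclusion of supports. The
indicators of `[n, ∞)` form a strictly descending chain, so the deviation is not `0`. Along any
descending chain the supports are eventually either all finite or all cofinite, so from then on
consecutive members differ only on a finite set; the interval between them is finite, and a
finite poset has deviation `0`.
-/

open Set

section Deviation

variable {P : Type*} [PartialOrder P]

theorem devLE_zero_of_isWF {S : Set P} (hS : S.IsWF) : DevLE.{v} S 0 := by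
  rw [DevLE]
  intro f hfS hf
  have hanti : Antitone f := antitone_nat_of_succ_le hf
  obtain ⟨_, ⟨N, rfl⟩, hmin⟩ :=
    (hS.mono (range_subset_iff.2 hfS)).exists_minimal (range_nonempty f)
  have hconst : ∀ n ≥ N, f n = f N := fun n hn =>
    le_antisymm (hanti hn) (hmin ⟨n, rfl⟩ (hanti hn))
  have hpoint : ∀ n ≥ N, ∀ x ∈ S ∩ Icc (f (n + 1)) (f n), x = f N := fun n hn x hx =>
    le_antisymm (hconst n hn ▸ hx.2.2) (hconst (n + 1) (by omega) ▸ hx.2.1)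
  exact ⟨N, fun n hn => Or.inl fun a ha b hb _ => (hpoint n hn a ha).trans (hpoint n hn b hb).symm⟩

theorem not_devLE_zero_of_strictAnti {S : Set P} {f : ℕ → P} (hf : StrictAnti f)
    (hfS : ∀ n, f n ∈ S) : ¬ DevLE.{v} S 0 := by
  rw [DevLE]
  intro h
  obtain ⟨N, hN⟩ := h f hfS fun n => (hf n.lt_succ_self).le
  have hlt : f (N + 1) < f N := hf N.lt_succ_self
  rcases hN N le_rfl with hdiscrete | ⟨o, ho, _⟩
  · exact hlt.ne (hdiscrete _ ⟨hfS _, le_rfl, hlt.le⟩ _ ⟨hfS _, hlt.le, le_rfl⟩ hlt.le)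
  · exact (zero_le (a := o)).not_gt ho

end Deviation

theorem Set.finite_Icc_of_finite_diff {α : Type*} {s t : Set α} (h : (t \ s).Finite) :
    (Icc s t).Finite := by
  refine (h.powerset.image (s ∪ ·)).subset fun u hu => ⟨u \ s, sdiff_subset_sdiff_left hu.2, ?_⟩
  simp only [union_sdiff_self, union_eq_right.2 hu.1]

theorem Set.exists_finite_diff_succ_of_antitone {α : Type*} {s : ℕ → Set α} (hs : Antitone s)
    (hfin : ∀ n, (s n).Finite ∨ (s n)ᶜ.Finite) : ∃ N, ∀ n ≥ N, (s n \ s (n + 1)).Finite := by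
  by_cases h : ∃ m, (s m).Finite
  · obtain ⟨m, hm⟩ := h
    exact ⟨m, fun n hn => (hm.subset (hs hn)).sdiff⟩
  · simp only [not_exists] at h
    exact ⟨0, fun n _ => ((hfin (n + 1)).resolve_left (h _)).subset fun _ hx => hx.2⟩

namespace IdemPoset

variable {ι D : Type*} [CommRing D]

def support {R : Subring (ι → D)} (e : IdemPoset R) : Set ι := {i | e.1.1 i = 1}

def indicatorIci (D : Type*) [CommRing D] (n : ℕ) : IdemPoset (EvConstSubring D) :=
  ⟨⟨fun k => if n ≤ k then 1 else 0, n, 1, fun _ hk => if_pos hk⟩,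
    Subtype.ext (funext fun k => by by_cases h : n ≤ k <;> simp [h])⟩

theorem support_indicatorIci [Nontrivial D] (n : ℕ) : (indicatorIci D n).support = Ici n := by
  ext k
  simp [support, indicatorIci]

variable [IsDomain D] {R : Subring (ι → D)}

theorem apply_eq_zero_or_eq_one (e : IdemPoset R) (i : ι) : e.1.1 i = 0 ∨ e.1.1 i = 1 :=
  IsIdempotentElem.iff_eq_zero_or_one.1 (congr_fun (congr_arg Subtype.val e.2) i)

theorem le_iff_support_subset {e f : IdemPoset R} : e ≤ f ↔ e.support ⊆ f.support := by
  have hle : e ≤ f ↔ ∀ i, e.1.1 i * f.1.1 i = e.1.1 i := by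
    refine ⟨fun h i => congr_fun (congr_arg Subtype.val h.1) i, fun h => ?_⟩
    have hmul : e.1 * f.1 = e.1 := Subtype.ext (funext h)
    exact ⟨hmul, mul_comm f.1 e.1 ▸ hmul⟩
  rw [hle]
  refine forall_congr' fun i => ?_
  rcases e.apply_eq_zero_or_eq_one i with he | he <;>
    rcases f.apply_eq_zero_or_eq_one i with hf | hf <;> simp [support, he, hf]

def supportEmbedding : IdemPoset R ↪o Set ι :=
  OrderEmbedding.ofMapLEIff support fun _ _ => le_iff_support_subset.symm

theorem finite_Icc_of_finite_support_diff {e f : IdemPoset R}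
    (h : (f.support \ e.support).Finite) : (Icc e f).Finite := by
  rw [← supportEmbedding.preimage_Icc]
  exact (finite_Icc_of_finite_diff h).preimage supportEmbedding.injective.injOn

theorem support_finite_or_compl_finite (e : IdemPoset (EvConstSubring D)) :
    e.support.Finite ∨ e.supportᶜ.Finite := by
  obtain ⟨N, c, hc⟩ := e.1.2
  have htail : ∀ n ≥ N, e.1.1 n = e.1.1 N := fun n hn => (hc n hn).trans (hc N le_rfl).symm
  rcases e.apply_eq_zero_or_eq_one N with h | h
  · refine .inl ((finite_Iio N).subset fun n (hn : e.1.1 n = 1) => ?_)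
    exact not_le.1 fun hle => zero_ne_one (((htail n hle).trans h).symm.trans hn)
  · refine .inr ((finite_Iio N).subset fun n (hn : e.1.1 n ≠ 1) => ?_)
    exact not_le.1 fun hle => hn ((htail n hle).trans h)

theorem strictAnti_indicatorIci : StrictAnti (indicatorIci D) := fun m n hmn =>
  supportEmbedding.lt_iff_lt.1 <| by
    simpa [supportEmbedding, support_indicatorIci] using Ici_ssubset_Ici.2 hmn

end IdemPoset

/-- For an integral domain `D` and the subring `E = D + D^(ℕ)` of eventually constant
sequences in `D^ℕ`, the poset of idempotents of `E` does not satisfy the descending chain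
condition, but it has deviation exactly `1`. -/
theorem evConstSubring_idempotents_no_dcc_dev_one (D : Type*) [CommRing D] [IsDomain D] :
    (∃ f : ℕ → IdemPoset (EvConstSubring D), StrictAnti f) ∧
    DevLE (Set.univ : Set (IdemPoset (EvConstSubring D))) (1 : Ordinal.{v}) ∧
    ¬ DevLE (Set.univ : Set (IdemPoset (EvConstSubring D))) (0 : Ordinal.{v}) := by
  refine ⟨⟨_, IdemPoset.strictAnti_indicatorIci⟩, ?_,
    not_devLE_zero_of_strictAnti IdemPoset.strictAnti_indicatorIci fun _ => trivial⟩
  rw [DevLE]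
  intro f _ hf
  obtain ⟨N, hN⟩ := exists_finite_diff_succ_of_antitone
    (IdemPoset.supportEmbedding.monotone.comp_antitone (antitone_nat_of_succ_le hf))
    fun n => (f n).support_finite_or_compl_finite
  refine ⟨N, fun n hn => Or.inr ⟨0, zero_lt_one, ?_⟩⟩
  rw [univ_inter]
  exact devLE_zero_of_isWF (IdemPoset.finite_Icc_of_finite_support_diff (hN n hn)).isWF
end

section
/- If a module M is not Krull-Schmidt artinian (i.e., fails DCC on direct summands), then there exists a strictly ascending chain M_1 < M_2 < ... of direct summands of M such that for each n, M_n admits a direct sum decomposition of cardinality n into nonzero summands. -/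
/-- If `M` is not Krull-Schmidt artinian (fails DCC on direct summands), then there is a
strictly ascending chain `M_1 < M_2 < ⋯` of direct summands of `M` such that, for each `n`,
`M_n` admits a direct sum decomposition into `n` nonzero summands (indices shifted: `g n`
has a decomposition of cardinality `n + 1`). -/
theorem exists_ascending_chain_with_decomps_of_not_dcc {R : Type*} [Ring R] {M : Type*}
    [AddCommGroup M] [Module R M]
    (hM : ∃ f : ℕ → Submodule R M, (∀ n, IsSummand (f n)) ∧ ∀ n, f (n + 1) < f n) :
    ∃ g : ℕ → Submodule R M, (∀ n, IsSummand (g n)) ∧ StrictMono g ∧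
      ∀ n, ∃ s : Set (Submodule R M), IsDecompOf (g n) s ∧ s.Finite ∧
        s.ncard = n + 1 := by
  classical
  obtain ⟨f, hfs, hf⟩ := hM
  have hfanti : Antitone f := antitone_nat_of_succ_le fun n => (hf n).le
  choose N hN using hfs
  -- `C k` is a complement of `f (k+1)` inside `f k`
  set C : ℕ → Submodule R M := fun k => f k ⊓ N (k + 1) with hC
  have hCle : ∀ k, C k ≤ f k := fun k => inf_le_left
  have hCdisj : ∀ k, C k ⊓ f (k + 1) = ⊥ := by
    intro k
    have h1 : C k ⊓ f (k + 1) ≤ N (k + 1) ⊓ f (k + 1) :=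
      inf_le_inf_right _ inf_le_right
    have h2 : N (k + 1) ⊓ f (k + 1) = ⊥ := by
      rw [inf_comm]; exact (hN (k + 1)).disjoint.eq_bot
    exact le_bot_iff.mp (h2 ▸ h1)
  have hCsup : ∀ k, f (k + 1) ⊔ C k = f k := by
    intro k
    calc f (k + 1) ⊔ C k = f (k + 1) ⊔ N (k + 1) ⊓ f k := by
          rw [hC]; simp only [inf_comm]
      _ = (f (k + 1) ⊔ N (k + 1)) ⊓ f k :=
          (sup_inf_assoc_of_le (N (k + 1)) (hfanti (Nat.le_succ k))).symm
      _ = f k := by rw [(hN (k + 1)).codisjoint.eq_top, top_inf_eq]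
  have hCne : ∀ k, C k ≠ ⊥ := by
    intro k hk
    have := hCsup k
    rw [hk, sup_bot_eq] at this
    exact absurd this (hf k).ne
  -- partial sups of the complements
  set G : ℕ → Submodule R M := fun k => (Finset.range k).sup C with hG
  have hGsucc : ∀ k, G (k + 1) = C k ⊔ G k := by
    intro k; simp [hG, Finset.range_add_one]
  have hGf : ∀ k, G k ⊓ f k = ⊥ ∧ G k ⊔ f k = f 0 := by
    intro k
    induction k with
    | zero => simp [hG]
    | succ k ih =>
      have h1 : G (k + 1) ⊓ f k = C k := by
        rw [hGsucc, sup_inf_assoc_of_le (G k) (hCle k), ih.1, sup_bot_eq]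
      constructor
      · calc G (k + 1) ⊓ f (k + 1) = G (k + 1) ⊓ (f k ⊓ f (k + 1)) := by
              rw [inf_of_le_right (hfanti (Nat.le_succ k))]
          _ = G (k + 1) ⊓ f k ⊓ f (k + 1) := by rw [inf_assoc]
          _ = C k ⊓ f (k + 1) := by rw [h1]
          _ = ⊥ := hCdisj k
      · rw [hGsucc, sup_comm (C k) (G k), sup_assoc, sup_comm (C k), hCsup, ih.2]
  -- the key disjointness for independence
  have hkey : ∀ k, C k ⊓ (G k ⊔ f (k + 1)) = ⊥ := by
    intro k
    have h1 : (G k ⊔ f (k + 1)) ⊓ f k = f (k + 1) := by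
      rw [sup_comm (G k), sup_inf_assoc_of_le (G k) (hfanti (Nat.le_succ k)),
        (hGf k).1, sup_bot_eq]
    calc C k ⊓ (G k ⊔ f (k + 1)) = C k ⊓ f k ⊓ (G k ⊔ f (k + 1)) := by
          rw [inf_of_le_left (hCle k)]
      _ = C k ⊓ ((G k ⊔ f (k + 1)) ⊓ f k) := by rw [inf_assoc, inf_comm (f k)]
      _ = C k ⊓ f (k + 1) := by rw [h1]
      _ = ⊥ := hCdisj k
  -- `C` is injective
  have hlt : ∀ i j, i < j → C i ≠ C j := by
    intro i j h hij
    have h1 : C i ≤ f (i + 1) := hij ▸ le_trans (hCle j) (hfanti h)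
    have h2 : C i ≤ ⊥ := by rw [← hCdisj i]; exact le_inf le_rfl h1
    exact hCne i (le_bot_iff.mp h2)
  have hCinj : Function.Injective C := by
    intro i j hij
    by_contra hne
    rcases lt_or_gt_of_ne hne with h | h
    · exact hlt i j h hij
    · exact hlt j i h hij.symm
  refine ⟨fun n => G (n + 1), ?_, ?_, ?_⟩
  · -- each `G (n+1)` is a summand of `M`
    intro n
    refine ⟨f (n + 1) ⊔ N 0, ?_, ?_⟩
    · rw [disjoint_iff]
      have h1 : (f (n + 1) ⊔ N 0) ⊓ f 0 = f (n + 1) := by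
        rw [sup_inf_assoc_of_le (N 0) (hfanti (Nat.zero_le _)),
          inf_comm (N 0) (f 0), (hN 0).disjoint.eq_bot, sup_bot_eq]
      have h2 : G (n + 1) ≤ f 0 := by
        rw [← (hGf (n + 1)).2]; exact le_sup_left
      calc G (n + 1) ⊓ (f (n + 1) ⊔ N 0)
          = G (n + 1) ⊓ (f 0 ⊓ (f (n + 1) ⊔ N 0)) := by
            rw [← inf_assoc, inf_of_le_left h2]
        _ = G (n + 1) ⊓ f (n + 1) := by rw [inf_comm (f 0), h1]
        _ = ⊥ := (hGf (n + 1)).1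
    · rw [codisjoint_iff, ← sup_assoc, (hGf (n + 1)).2, (hN 0).codisjoint.eq_top]
  · -- strict monotonicity
    apply strictMono_nat_of_lt_succ
    intro n
    rw [hGsucc (n + 1), sup_comm, left_lt_sup]
    intro hle
    have h2 : C (n + 1) ≤ ⊥ := by
      rw [← (hGf (n + 1)).1]; exact le_inf hle (hCle (n + 1))
    exact hCne (n + 1) (le_bot_iff.mp h2)
  · -- decompositions
    intro n
    refine ⟨↑((Finset.range (n + 1)).image C), ⟨?_, ?_, ?_⟩, Finset.finite_toSet _, ?_⟩
    · -- sSupIndep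
      intro a ha
      simp only [Finset.coe_image, Finset.coe_range, Set.mem_image, Set.mem_Iio] at ha
      obtain ⟨k, hk, rfl⟩ := ha
      have hle : sSup (↑((Finset.range (n + 1)).image C) \ {C k}) ≤ G k ⊔ f (k + 1) := by
        apply sSup_le
        rintro b ⟨hb, hbne⟩
        simp only [Finset.coe_image, Finset.coe_range, Set.mem_image, Set.mem_Iio] at hb
        obtain ⟨j, hj, rfl⟩ := hb
        have hjk : j ≠ k := fun h => hbne (by simp [h])
        rcases lt_or_gt_of_ne hjk with h | h
        · exact le_trans (Finset.le_sup (Finset.mem_range.mpr h)) le_sup_left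
        · exact le_trans (le_trans (hCle j) (hfanti h)) le_sup_right
      exact Disjoint.mono_right hle (disjoint_iff.mpr (hkey k))
    · -- sSup = G (n+1)
      rw [← Finset.sup_id_eq_sSup, Finset.sup_image]
      rfl
    · -- ⊥ not a member
      intro hbot
      simp only [Finset.coe_image, Finset.coe_range, Set.mem_image, Set.mem_Iio] at hbot
      obtain ⟨k, _, hk⟩ := hbot
      exact hCne k hk
    · rw [Set.ncard_coe_finset, Finset.card_image_of_injective _ hCinj, Finset.card_range]
end

section
/- Let M be a module with finite Krull-Schmidt length. If the Krull-Schmidt length function KSℓ is subadditive on direct summands of M (KSℓ(A ⊕ B) ≤ KSℓ(A) + KSℓ(B) whenever A, B are independent direct summands with A ⊕ B a direct summand of M), then any two decompositions of M into indecomposable summands have the same cardinality. -/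
/-- The Krull-Schmidt length of a submodule `N`: the supremum of the cardinalities of the
direct sum decompositions of `N` into nonzero summands. -/
noncomputable def KSl {R : Type*} [Ring R] {M : Type*} [AddCommGroup M] [Module R M]
    (N : Submodule R M) : ℕ :=
  sSup {k : ℕ | ∃ s : Set (Submodule R M), IsDecompOf N s ∧ s.Finite ∧ s.ncard = k}

section aux
variable {R : Type*} [Ring R] {M : Type*} [AddCommGroup M] [Module R M]

lemma decomp_of_indecomp {N : Submodule R M} (hN : IsIndecomp N)
    {s : Set (Submodule R M)} (hs : IsDecompOf N s) : s = {N} := by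
  obtain ⟨hind, hsup, hbot⟩ := hs
  have hne : s.Nonempty := by
    rcases Set.eq_empty_or_nonempty s with h | h
    · exfalso; apply hN.1; rw [← hsup, h, sSup_empty]
    · exact h
  obtain ⟨B, hB⟩ := hne
  have hd : Disjoint B (sSup (s \ {B})) := hind hB
  have hsup2 : B ⊔ sSup (s \ {B}) = N := by
    rw [← sSup_insert, Set.insert_diff_singleton, Set.insert_eq_of_mem hB, hsup]
  have hBne : B ≠ ⊥ := fun h => hbot (h ▸ hB)
  rcases hN.2 B (sSup (s \ {B})) hsup2 (disjoint_iff.mp hd) with h | h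
  · exact absurd h hBne
  · have hdiff : s \ {B} = ∅ := by
      by_contra hne'
      obtain ⟨C, hC⟩ := Set.nonempty_iff_ne_empty.mpr hne'
      have : C = ⊥ := le_bot_iff.mp (h ▸ le_sSup hC)
      exact hbot (this ▸ hC.1)
    have hBN : B = N := by rw [← hsup2, hdiff, sSup_empty, sup_bot_eq]
    rw [← hBN]
    apply Set.eq_singleton_iff_unique_mem.mpr
    exact ⟨hB, fun C hC => by
      by_contra h'
      exact absurd (Set.eq_empty_iff_forall_notMem.mp hdiff C ⟨hC, h'⟩) (fun x => x)⟩

lemma ksl_indecomp {N : Submodule R M} (hN : IsIndecomp N) : KSl N = 1 := by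
  have hset : {k : ℕ | ∃ s : Set (Submodule R M), IsDecompOf N s ∧ s.Finite ∧ s.ncard = k}
      = {1} := by
    ext k
    simp only [Set.mem_setOf_eq, Set.mem_singleton_iff]
    constructor
    · rintro ⟨s, hs, hfin, rfl⟩
      rw [decomp_of_indecomp hN hs, Set.ncard_singleton]
    · rintro rfl
      refine ⟨{N}, ⟨sSupIndep_singleton N, sSup_singleton, ?_⟩, Set.finite_singleton N,
        Set.ncard_singleton N⟩
      simp [Ne.symm hN.1]
  rw [KSl, hset, csSup_singleton]

lemma disj_aux {s : Set (Submodule R M)} (hind : sSupIndep s) :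
    ∀ t : Finset (Submodule R M), ↑t ⊆ s →
      Disjoint (sSup (↑t : Set (Submodule R M))) (sSup (s \ ↑t)) := by
  classical
  intro t
  induction t using Finset.induction_on with
  | empty => intro _; simp
  | @insert a t ha ih =>
    intro hts
    have hats : (↑(insert a t) : Set (Submodule R M)) = insert a ↑t := by simp
    have has : a ∈ s := hts (by simp)
    have hta : (↑t : Set (Submodule R M)) ⊆ s := fun x hx => hts (by simp [hx])
    have hanott : a ∉ (↑t : Set (Submodule R M)) := by simpa using ha
    rw [hats, sSup_insert]
    have hdiffeq : s \ insert a ↑t = (s \ ↑t) \ {a} := by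
      ext x; simp; tauto
    rw [hdiffeq]
    have h1 : Disjoint a (sSup ((s \ ↑t) \ {a})) :=
      hind.disjoint_sSup has (fun x hx => hx.1.1) (by simp)
    have h2 : Disjoint (sSup (↑t : Set (Submodule R M))) (a ⊔ sSup ((s \ ↑t) \ {a})) := by
      refine (ih hta).mono_right ?_
      exact sup_le (le_sSup ⟨has, hanott⟩) (sSup_le_sSup Set.diff_subset)
    rw [sup_comm]
    exact h1.disjoint_sup_left_of_disjoint_sup_right h2

lemma summand_aux {s : Set (Submodule R M)} (hind : sSupIndep s) (hsup : sSup s = ⊤)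
    (t : Finset (Submodule R M)) (ht : ↑t ⊆ s) :
    IsSummand (sSup (↑t : Set (Submodule R M))) := by
  refine ⟨sSup (s \ ↑t), disj_aux hind t ht, ?_⟩
  rw [codisjoint_iff, ← sSup_union, Set.union_diff_cancel ht, hsup]

lemma ksl_aux {s : Set (Submodule R M)} (hind : sSupIndep s) (hsup : sSup s = ⊤)
    (hidx : ∀ A ∈ s, IsIndecomp A)
    (hsub : ∀ A B : Submodule R M, IsSummand A → IsSummand B → A ⊓ B = ⊥ →
      IsSummand (A ⊔ B) → KSl (A ⊔ B) ≤ KSl A + KSl B) :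
    ∀ t : Finset (Submodule R M), ↑t ⊆ s →
      KSl (sSup (↑t : Set (Submodule R M))) ≤ t.card := by
  classical
  intro t
  induction t using Finset.induction_on with
  | empty =>
    intro _
    simp only [Finset.coe_empty, sSup_empty, Finset.card_empty, Nat.le_zero]
    have hset : {k : ℕ | ∃ s : Set (Submodule R M),
        IsDecompOf (⊥ : Submodule R M) s ∧ s.Finite ∧ s.ncard = k} = {0} := by
      ext k
      simp only [Set.mem_setOf_eq, Set.mem_singleton_iff]
      constructor
      · rintro ⟨u, ⟨_, husup, hubot⟩, _, rfl⟩
        have : u = ∅ := by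
          ext C
          simp only [Set.mem_empty_iff_false, iff_false]
          intro hC
          exact hubot ((le_bot_iff.mp (husup ▸ le_sSup hC)) ▸ hC)
        simp [this]
      · rintro rfl
        exact ⟨∅, ⟨by simp [sSupIndep], by simp, by simp⟩, by simp, by simp⟩
    rw [KSl, hset, csSup_singleton]
  | @insert a t ha ih =>
    intro hts
    have has : a ∈ s := hts (by simp)
    have hta : (↑t : Set (Submodule R M)) ⊆ s := fun x hx => hts (by simp [hx])
    have hanott : a ∉ (↑t : Set (Submodule R M)) := by simpa using ha
    have hats : (↑(insert a t) : Set (Submodule R M)) = insert a ↑t := by simp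
    have hsa : IsSummand a := by
      have := summand_aux hind hsup {a} (by simpa using has)
      simpa using this
    have hst : IsSummand (sSup (↑t : Set (Submodule R M))) := summand_aux hind hsup t hta
    have hdisj : Disjoint a (sSup (↑t : Set (Submodule R M))) :=
      hind.disjoint_sSup has hta hanott
    have hsat : IsSummand (a ⊔ sSup (↑t : Set (Submodule R M))) := by
      have := summand_aux hind hsup (insert a t) hts
      rwa [hats, sSup_insert] at this
    rw [hats, sSup_insert]
    calc KSl (a ⊔ sSup (↑t : Set (Submodule R M)))
        ≤ KSl a + KSl (sSup (↑t : Set (Submodule R M))) :=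
          hsub _ _ hsa hst (disjoint_iff.mp hdisj) hsat
      _ ≤ 1 + t.card := by
          rw [ksl_indecomp (hidx a has)]
          exact Nat.add_le_add_left (ih hta) 1
      _ = (insert a t).card := by rw [Finset.card_insert_of_notMem ha]; omega

end aux

/-- Let `M` have finite Krull-Schmidt length. If the Krull-Schmidt length function is
subadditive on direct summands of `M`, then any two decompositions of `M` into finitely
many indecomposable summands have the same cardinality. -/
theorem indecomp_decomps_same_card_of_KSl_subadditive {R : Type*} [Ring R] {M : Type*}
    [AddCommGroup M] [Module R M]
    (hKS : ∃ n : ℕ, ∀ s : Set (Submodule R M), IsDecompOf ⊤ s → s.Finite ∧ s.ncard ≤ n)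
    (hsub : ∀ A B : Submodule R M, IsSummand A → IsSummand B → A ⊓ B = ⊥ →
      IsSummand (A ⊔ B) → KSl (A ⊔ B) ≤ KSl A + KSl B) :
    ∀ s t : Set (Submodule R M),
      (IsDecompOf (⊤ : Submodule R M) s ∧ s.Finite ∧ ∀ A ∈ s, IsIndecomp A) →
      (IsDecompOf (⊤ : Submodule R M) t ∧ t.Finite ∧ ∀ A ∈ t, IsIndecomp A) →
      s.ncard = t.ncard := by
  obtain ⟨n, hn⟩ := hKS
  suffices key : ∀ s : Set (Submodule R M),
      (IsDecompOf (⊤ : Submodule R M) s ∧ s.Finite ∧ ∀ A ∈ s, IsIndecomp A) →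
      s.ncard = KSl (⊤ : Submodule R M) by
    intro s t hs ht
    rw [key s hs, key t ht]
  rintro s ⟨hdec, hfin, hidx⟩
  obtain ⟨hind, hsup, hbot⟩ := hdec
  refine le_antisymm ?_ ?_
  · -- lower bound: ncard ≤ KSl ⊤
    apply le_csSup
    · refine ⟨n, fun k hk => ?_⟩
      obtain ⟨u, hu, _, rfl⟩ := hk
      exact (hn u hu).2
    · exact ⟨s, ⟨hind, hsup, hbot⟩, hfin, rfl⟩
  · -- upper bound
    have h := ksl_aux hind hsup hidx hsub hfin.toFinset (by simp [Set.Finite.coe_toFinset])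
    rw [Set.Finite.coe_toFinset, hsup] at h
    rwa [Set.ncard_eq_toFinset_card s hfin]
end
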